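/- arXiv:1106.2781 — 11 statements merged into one kernel-verified Lean document; each statement's English description precedes it below -/
import Mathlib

section
/- The function ψ₁(x) = (r+α)·e^{r·x} − (s+α)·e^{s·x} satisfies ψ₁'(x) > 0 for every real x (so ψ₁ is strictly increasing on ℝ), and for every x > 0 it satisfies the integro-differential equation c·ψ₁'(x) − (λ+δ)·ψ₁(x) + λ·∫₀ˣ ψ₁(x−y)·α·e^{−α·y} dy = 0. -/
/-!
Each exponential `(ξ + α) e^{ξx}` convolves against the claim density to
`α (e^{ξx} - e^{-αx})`, so in `ψ₁` the `e^{-αx}` terms cancel and the equation splits into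
one identity per exponential, namely the characteristic equation at `r` and at `s`.
Positivity of `ψ₁'` is termwise: `r (r + α) > 0` and `s (s + α) < 0`.
-/

open Real

lemma hasDerivAt_sub_mul_exp (a b r s x : ℝ) :
    HasDerivAt (fun z => a * exp (r * z) - b * exp (s * z))
      (r * a * exp (r * x) - s * b * exp (s * x)) x := by
  have hr := (((hasDerivAt_id x).const_mul r).exp).const_mul a
  have hs := (((hasDerivAt_id x).const_mul s).exp).const_mul b
  have h := hr.sub hs
  simp only [id, mul_one] at h
  exact h.congr_deriv (by ring)

lemma sub_mul_exp_pos {al r s : ℝ} (hal : 0 < al) (hr : 0 < r) (hs1 : -al < s) (hs2 : s < 0)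
    (x : ℝ) : 0 < r * (r + al) * exp (r * x) - s * (s + al) * exp (s * x) := by
  have hr' : 0 < r * (r + al) * exp (r * x) := by positivity
  have hs' : s * (s + al) * exp (s * x) < 0 :=
    mul_neg_of_neg_of_pos (mul_neg_of_neg_of_pos hs2 (by linarith)) (exp_pos _)
  linarith

lemma integral_mul_exp_mul_exp_density (ξ al x : ℝ) :
    ∫ y in (0:ℝ)..x, (ξ + al) * exp (ξ * (x - y)) * (al * exp (-al * y))
      = al * (exp (ξ * x) - exp (-al * x)) := by
  have hF : ∀ y ∈ Set.uIcc (0:ℝ) x,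
      HasDerivAt (fun t => -al * exp (ξ * (x - t) - al * t))
        ((ξ + al) * exp (ξ * (x - y)) * (al * exp (-al * y))) y := by
    intro y _
    have h := ((((hasDerivAt_id y).const_sub x).const_mul ξ).sub
      ((hasDerivAt_id y).const_mul al)).exp.const_mul (-al)
    simp only [id, Pi.sub_apply] at h
    refine h.congr_deriv ?_
    rw [mul_mul_mul_comm, ← exp_add]
    ring_nf
  rw [intervalIntegral.integral_eq_sub_of_hasDerivAt hF
    (Continuous.intervalIntegrable (by fun_prop) _ _)]
  simp only [sub_self, mul_zero, sub_zero, zero_sub]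
  ring_nf

theorem stmt_1_general (c lam del al r s : ℝ)
    (hal : 0 < al)
    (hr : c * r ^ 2 - (lam + del - al * c) * r - al * del = 0)
    (hs : c * s ^ 2 - (lam + del - al * c) * s - al * del = 0)
    (hs1 : -al < s) (hs2 : s < 0) (hr1 : 0 < r) :
    (∀ x : ℝ,
      HasDerivAt (fun z => (r + al) * Real.exp (r * z) - (s + al) * Real.exp (s * z))
        (r * (r + al) * Real.exp (r * x) - s * (s + al) * Real.exp (s * x)) x ∧
      0 < r * (r + al) * Real.exp (r * x) - s * (s + al) * Real.exp (s * x)) ∧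
    (StrictMono fun z => (r + al) * Real.exp (r * z) - (s + al) * Real.exp (s * z)) ∧
    ∀ x : ℝ, 0 < x →
      c * (r * (r + al) * Real.exp (r * x) - s * (s + al) * Real.exp (s * x))
        - (lam + del) * ((r + al) * Real.exp (r * x) - (s + al) * Real.exp (s * x))
        + lam * ∫ y in (0:ℝ)..x,
            ((r + al) * Real.exp (r * (x - y)) - (s + al) * Real.exp (s * (x - y)))
              * (al * Real.exp (-al * y)) = 0 := by
  have hderiv := hasDerivAt_sub_mul_exp (r + al) (s + al) r s
  have hpos := sub_mul_exp_pos hal hr1 hs1 hs2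
  refine ⟨fun x => ⟨hderiv x, hpos x⟩,
    strictMono_of_deriv_pos fun x => (hderiv x).deriv ▸ hpos x, fun x _ => ?_⟩
  have hconv : ∫ y in (0:ℝ)..x,
      ((r + al) * exp (r * (x - y)) - (s + al) * exp (s * (x - y))) * (al * exp (-al * y))
        = al * (exp (r * x) - exp (-al * x)) - al * (exp (s * x) - exp (-al * x)) := by
    simp only [sub_mul]
    rw [intervalIntegral.integral_sub (Continuous.intervalIntegrable (by fun_prop) _ _)
      (Continuous.intervalIntegrable (by fun_prop) _ _),
      integral_mul_exp_mul_exp_density, integral_mul_exp_mul_exp_density]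
  rw [hconv]
  linear_combination exp (r * x) * hr - exp (s * x) * hs

/-- ψ₁(x) = (r+α)·e^{rx} − (s+α)·e^{sx} satisfies ψ₁'(x) > 0 for every real x
(so ψ₁ is strictly increasing on ℝ), and for every x > 0 it satisfies the
integro-differential equation
c·ψ₁'(x) − (λ+δ)·ψ₁(x) + λ·∫₀ˣ ψ₁(x−y)·α·e^{−αy} dy = 0. -/
theorem stmt_1 (c lam del al r s : ℝ) (hc : 0 < c) (hlam : 0 < lam) (hdel : 0 < del)
    (hal : 0 < al)
    (hr : c * r ^ 2 - (lam + del - al * c) * r - al * del = 0)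
    (hs : c * s ^ 2 - (lam + del - al * c) * s - al * del = 0)
    (hs1 : -al < s) (hs2 : s < 0) (hr1 : 0 < r) :
    (∀ x : ℝ,
      HasDerivAt (fun z => (r + al) * Real.exp (r * z) - (s + al) * Real.exp (s * z))
        (r * (r + al) * Real.exp (r * x) - s * (s + al) * Real.exp (s * x)) x ∧
      0 < r * (r + al) * Real.exp (r * x) - s * (s + al) * Real.exp (s * x)) ∧
    (StrictMono fun z => (r + al) * Real.exp (r * z) - (s + al) * Real.exp (s * z)) ∧
    ∀ x : ℝ, 0 < x →
      c * (r * (r + al) * Real.exp (r * x) - s * (s + al) * Real.exp (s * x))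
        - (lam + del) * ((r + al) * Real.exp (r * x) - (s + al) * Real.exp (s * x))
        + lam * ∫ y in (0:ℝ)..x,
            ((r + al) * Real.exp (r * (x - y)) - (s + al) * Real.exp (s * (x - y)))
              * (al * Real.exp (-al * y)) = 0 :=
  stmt_1_general c lam del al r s hal hr hs hs1 hs2 hr1
end

section
/- Let t be any real number with t < 0 and α·δ + t·(λ+δ) < 0. Then (s−t)/(r−t) − ((λ+δ)·s + α·δ)/((λ+δ)·r + α·δ) = (s−r)·(α·δ + t·(λ+δ)) / ((r−t)·((λ+δ)·r + α·δ)) > 0, and consequently s·(s−t)/(r·(r−t)) < s·((λ+δ)·s + α·δ)/(r·((λ+δ)·r + α·δ)). Hence, if moreover s < t, then d := (1/(r−s))·ln( s(s−t)/(r(r−t)) ) satisfies d < b, where b = (1/(r−s))·ln( s²(s+α)/(r²(r+α)) ), and the function ψ₁(x) = (r+α)·e^{rx} − (s+α)·e^{sx} is concave on the interval (0, d). -/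
/-!
Since `r` and `s` are roots of the quadratic, `(λ+δ)·x + αδ = c·x·(x+α)` for `x ∈ {r, s}`; this
makes the difference of the two quotients an explicit fraction whose sign is read off, and turns
`s((λ+δ)s+αδ)/(r((λ+δ)r+αδ))` into `s²(s+α)/(r²(r+α))`, so `d < b` by monotonicity of `log`.
For `ψ(x) = p e^{rx} - q e^{sx}` with `s < r` we have `ψ'' ≤ 0` exactly when
`e^{(r-s)x} ≤ s²q/(r²p)`, i.e. on `(-∞, b]` for `p = r+α`, `q = s+α`, and `(0, d) ⊆ (-∞, b]`.
-/

open Real Set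

lemma hasDerivAt_const_mul_exp_mul (p r x : ℝ) :
    HasDerivAt (fun x => p * exp (r * x)) (p * r * exp (r * x)) x := by
  refine (((hasDerivAt_id' x).const_mul r).exp.const_mul p).congr_deriv ?_
  ring

lemma sq_mul_mul_exp_le_of_le_log {p q r s x : ℝ} (hrs : s < r) (hp : 0 < p) (hq : 0 < q)
    (hr : r ≠ 0) (hs : s ≠ 0) (hx : x ≤ 1 / (r - s) * log (s ^ 2 * q / (r ^ 2 * p))) :
    r ^ 2 * p * exp (r * x) ≤ s ^ 2 * q * exp (s * x) := by
  have hpr : 0 < r ^ 2 * p := by positivity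
  have hexp : exp ((r - s) * x) ≤ s ^ 2 * q / (r ^ 2 * p) := by
    rw [← le_log_iff_exp_le (by positivity)]
    rwa [mul_comm, ← le_div_iff₀ (sub_pos.2 hrs), div_eq_mul_inv, mul_comm, ← one_div]
  calc r ^ 2 * p * exp (r * x) = r ^ 2 * p * (exp ((r - s) * x) * exp (s * x)) := by
        rw [← exp_add]; ring_nf
    _ ≤ r ^ 2 * p * (s ^ 2 * q / (r ^ 2 * p) * exp (s * x)) := by gcongr
    _ = s ^ 2 * q * exp (s * x) := by field_simp

lemma concaveOn_mul_exp_sub_mul_exp {p q r s : ℝ} (hrs : s < r) (hp : 0 < p) (hq : 0 < q)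
    (hr : r ≠ 0) (hs : s ≠ 0) :
    ConcaveOn ℝ (Iic (1 / (r - s) * log (s ^ 2 * q / (r ^ 2 * p))))
      (fun x => p * exp (r * x) - q * exp (s * x)) := by
  have hf' x := (hasDerivAt_const_mul_exp_mul p r x).sub (hasDerivAt_const_mul_exp_mul q s x)
  have hf'' x := (hasDerivAt_const_mul_exp_mul (p * r) r x).sub
    (hasDerivAt_const_mul_exp_mul (q * s) s x)
  refine concaveOn_of_hasDerivWithinAt2_nonpos (convex_Iic _) (by fun_prop)
    (fun x _ => (hf' x).hasDerivWithinAt) (fun x _ => (hf'' x).hasDerivWithinAt) fun x hx => ?_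
  rw [interior_Iic] at hx
  have hle := sq_mul_mul_exp_le_of_le_log hrs hp hq hr hs hx.le
  linarith

lemma mul_add_eq_of_quadratic_eq_zero {a c K m x : ℝ}
    (h : c * x ^ 2 - (K - a * c) * x - m = 0) : K * x + m = c * x * (x + a) := by
  linear_combination -h

lemma sub_div_sub_sub_div_mul_add_eq {K m r s t : ℝ} (hrt : r - t ≠ 0) (hr : K * r + m ≠ 0) :
    (s - t) / (r - t) - (K * s + m) / (K * r + m)
      = (s - r) * (m + t * K) / ((r - t) * (K * r + m)) := by
  rw [div_sub_div _ _ hrt hr]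
  ring

theorem stmt_5_general (c lam del al r s t d b : ℝ) (hc : 0 < c)
    (hal : 0 < al)
    (hr : c * r ^ 2 - (lam + del - al * c) * r - al * del = 0)
    (hs : c * s ^ 2 - (lam + del - al * c) * s - al * del = 0)
    (hs1 : -al < s) (hs2 : s < 0) (hr1 : 0 < r)
    (ht0 : t < 0) (ht1 : al * del + t * (lam + del) < 0)
    (hd : d = (1 / (r - s)) * Real.log (s * (s - t) / (r * (r - t))))
    (hb : b = (1 / (r - s)) * Real.log (s ^ 2 * (s + al) / (r ^ 2 * (r + al)))) :
    (s - t) / (r - t) - ((lam + del) * s + al * del) / ((lam + del) * r + al * del)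
      = (s - r) * (al * del + t * (lam + del))
          / ((r - t) * ((lam + del) * r + al * del)) ∧
    0 < (s - r) * (al * del + t * (lam + del))
          / ((r - t) * ((lam + del) * r + al * del)) ∧
    s * (s - t) / (r * (r - t))
      < s * ((lam + del) * s + al * del) / (r * ((lam + del) * r + al * del)) ∧
    (s < t → d < b ∧
      ConcaveOn ℝ (Set.Ioo 0 d)
        (fun x => (r + al) * Real.exp (r * x) - (s + al) * Real.exp (s * x))) := by
  have hrt : 0 < r - t := by linarith
  have hDr := mul_add_eq_of_quadratic_eq_zero hr
  have hDs := mul_add_eq_of_quadratic_eq_zero hs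
  have hDr_pos : 0 < (lam + del) * r + al * del := by rw [hDr]; positivity
  have hdiff := sub_div_sub_sub_div_mul_add_eq (s := s) hrt.ne' hDr_pos.ne'
  have hpos : 0 < (s - r) * (al * del + t * (lam + del))
      / ((r - t) * ((lam + del) * r + al * del)) :=
    div_pos (mul_pos_of_neg_of_neg (by linarith) ht1) (mul_pos hrt hDr_pos)
  have hlt : s * (s - t) / (r * (r - t))
      < s * ((lam + del) * s + al * del) / (r * ((lam + del) * r + al * del)) := by
    rw [mul_div_mul_comm, mul_div_mul_comm]
    exact mul_lt_mul_of_neg_left (by linarith) (div_neg_of_neg_of_pos hs2 hr1)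
  refine ⟨hdiff, hpos, hlt, fun hst => ?_⟩
  have hA : 0 < s * (s - t) / (r * (r - t)) :=
    div_pos (mul_pos_of_neg_of_neg hs2 (by linarith)) (mul_pos hr1 hrt)
  have hB : s * ((lam + del) * s + al * del) / (r * ((lam + del) * r + al * del))
      = s ^ 2 * (s + al) / (r ^ 2 * (r + al)) := by
    rw [hDr, hDs]
    field_simp
  have hdb : d < b := by
    rw [hd, hb, ← hB]
    exact mul_lt_mul_of_pos_left (Real.log_lt_log hA hlt) (one_div_pos.2 (by linarith))
  refine ⟨hdb, ?_⟩
  have hψ := concaveOn_mul_exp_sub_mul_exp (by linarith : s < r) (by linarith : 0 < r + al)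
    (by linarith : 0 < s + al) hr1.ne' hs2.ne
  exact hψ.subset (fun x hx => hb ▸ (hx.2.trans hdb).le) (convex_Ioo 0 d)

/-- For t < 0 with αδ + t(λ+δ) < 0:
(s−t)/(r−t) − ((λ+δ)s+αδ)/((λ+δ)r+αδ) = (s−r)(αδ+t(λ+δ))/((r−t)((λ+δ)r+αδ)) > 0,
hence s(s−t)/(r(r−t)) < s((λ+δ)s+αδ)/(r((λ+δ)r+αδ)). If moreover s < t, then
d := (1/(r−s))·ln(s(s−t)/(r(r−t))) < b := (1/(r−s))·ln(s²(s+α)/(r²(r+α))), and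
ψ₁(x) = (r+α)e^{rx} − (s+α)e^{sx} is concave on (0, d). -/
theorem stmt_5 (c lam del al r s t d b : ℝ) (hc : 0 < c) (hlam : 0 < lam)
    (hdel : 0 < del) (hal : 0 < al)
    (hr : c * r ^ 2 - (lam + del - al * c) * r - al * del = 0)
    (hs : c * s ^ 2 - (lam + del - al * c) * s - al * del = 0)
    (hs1 : -al < s) (hs2 : s < 0) (hr1 : 0 < r)
    (ht0 : t < 0) (ht1 : al * del + t * (lam + del) < 0)
    (hd : d = (1 / (r - s)) * Real.log (s * (s - t) / (r * (r - t))))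
    (hb : b = (1 / (r - s)) * Real.log (s ^ 2 * (s + al) / (r ^ 2 * (r + al)))) :
    (s - t) / (r - t) - ((lam + del) * s + al * del) / ((lam + del) * r + al * del)
      = (s - r) * (al * del + t * (lam + del))
          / ((r - t) * ((lam + del) * r + al * del)) ∧
    0 < (s - r) * (al * del + t * (lam + del))
          / ((r - t) * ((lam + del) * r + al * del)) ∧
    s * (s - t) / (r * (r - t))
      < s * ((lam + del) * s + al * del) / (r * ((lam + del) * r + al * del)) ∧
    (s < t → d < b ∧
      ConcaveOn ℝ (Set.Ioo 0 d)
        (fun x => (r + al) * Real.exp (r * x) - (s + al) * Real.exp (s * x))) :=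
  stmt_5_general c lam del al r s t d b hc hal hr hs hs1 hs2 hr1 ht0 ht1 hd hb
end

section
/- The identity (s+α)·(δ·t − δ·s − s·t·u₀)·r·(r−t) = (r+α)·(δ·t − δ·r − r·t·u₀)·s·(s−t) holds; that is, the threshold level obtained from Gerber–Shiu's formula, (1/(r−s))·ln[ (s+α)(δt−δs−stu₀) / ((r+α)(δt−δr−rtu₀)) ], coincides with (1/(r−s))·ln[ s(s−t)/(r(r−t)) ] whenever both logarithms are defined. -/
/-- The identity
(s+α)(δt−δs−stu₀)·r(r−t) = (r+α)(δt−δr−rtu₀)·s(s−t) holds; so the two expressions for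
the threshold level coincide whenever both logarithms are defined (arguments positive). -/
theorem stmt_6 (c lam del al u0 r s t : ℝ) (hc : 0 < c) (hlam : 0 < lam)
    (hdel : 0 < del) (hal : 0 < al) (hu0 : 0 < u0) (hu0c : u0 < c)
    (hr : c * r ^ 2 - (lam + del - al * c) * r - al * del = 0)
    (hs : c * s ^ 2 - (lam + del - al * c) * s - al * del = 0)
    (hs1 : -al < s) (hs2 : s < 0) (hr1 : 0 < r)
    (ht0 : t < 0)
    (htr : (c - u0) * t ^ 2 - (lam + del - al * (c - u0)) * t - al * del = 0) :
    (s + al) * (del * t - del * s - s * t * u0) * (r * (r - t))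
      = (r + al) * (del * t - del * r - r * t * u0) * (s * (s - t)) ∧
    (0 < (s + al) * (del * t - del * s - s * t * u0)
          / ((r + al) * (del * t - del * r - r * t * u0)) →
      0 < s * (s - t) / (r * (r - t)) →
      (1 / (r - s)) * Real.log ((s + al) * (del * t - del * s - s * t * u0)
          / ((r + al) * (del * t - del * r - r * t * u0)))
        = (1 / (r - s)) * Real.log (s * (s - t) / (r * (r - t)))) := by
  have hrs : r - s ≠ 0 := sub_ne_zero.mpr (ne_of_gt (lt_trans hs2 hr1))
  have hkey : (r - s) * (c * (r + s) - (lam + del - al * c)) = 0 := by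
    linear_combination hr - hs
  have h1 : c * (r + s) - (lam + del - al * c) = 0 :=
    (mul_eq_zero.mp hkey).resolve_left hrs
  have h2 : al * del + c * r * s = 0 := by linear_combination r * h1 - hr
  have h3 : c * (t - r) * (t - s) - u0 * t * (t + al) = 0 := by
    linear_combination htr - t * h1 + h2
  have hmain : (s + al) * (del * t - del * s - s * t * u0) * (r * (r - t))
      = (r + al) * (del * t - del * r - r * t * u0) * (s * (s - t)) := by
    linear_combination (-(r - s) * (t - r) * (t - s)) * h2 + ((r - s) * r * s) * h3
  refine ⟨hmain, fun hp1 hp2 => ?_⟩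
  have hB : (r + al) * (del * t - del * r - r * t * u0) ≠ 0 := by
    intro h; rw [h, div_zero] at hp1; exact lt_irrefl 0 hp1
  have hD : r * (r - t) ≠ 0 := by
    intro h; rw [h, div_zero] at hp2; exact lt_irrefl 0 hp2
  have heq : (s + al) * (del * t - del * s - s * t * u0)
      / ((r + al) * (del * t - del * r - r * t * u0)) = s * (s - t) / (r * (r - t)) := by
    rw [div_eq_div_iff hB hD]; linear_combination hmain
  rw [heq]
end

section
/- Suppose (r+α)·(δ·t − δ·r − r·t·u₀) ≠ 0 and ρ := (s+α)(δt − δs − s·t·u₀) / ((r+α)(δt − δr − r·t·u₀)) > 0, and set d = (1/(r−s))·ln ρ. Then the threshold equation ψ₁(d)/ψ₁'(d) = 1/t + u₀/δ holds, where ψ₁(x) = (r+α)·e^{rx} − (s+α)·e^{sx}; explicitly, [(r+α)·e^{rd} − (s+α)·e^{sd}] / [r(r+α)·e^{rd} − s(s+α)·e^{sd}] = 1/t + u₀/δ. -/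
/-! Taking logarithms, the choice of `d` says exactly that `e^{rd}·A = e^{sd}·B`, where `ρ = B / A`.
Writing `a = (r+α)e^{rd}`, `b = (s+α)e^{sd}` and `k = 1/t + u₀/δ`, and dividing by `tδ`, this is
`a(1 - rk) = b(1 - sk)`, i.e. `a - b = k(ra - sb)`: the threshold equation up to clearing the
denominator `ψ₁'(d) = ra - sb`, which cannot vanish since `r ≠ s` and `b ≠ 0`. -/

open Real

theorem exp_mul_mul_eq_of_eq_log_div {r s d A B : ℝ} (hrs : r ≠ s) (hρ : 0 < B / A)
    (hd : d = 1 / (r - s) * log (B / A)) : exp (r * d) * A = exp (s * d) * B := by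
  have hA : A ≠ 0 := (div_ne_zero_iff.mp hρ.ne').2
  have hexp : exp ((r - s) * d) = B / A := by
    rw [hd, ← mul_assoc, mul_one_div_cancel (sub_ne_zero.mpr hrs), one_mul, exp_log hρ]
  have hsplit : exp (r * d) = exp (s * d) * exp ((r - s) * d) := by
    rw [← exp_add]; ring_nf
  rw [hsplit, hexp]
  field_simp

theorem div_eq_of_mul_one_sub_eq {a b r s k : ℝ} (hrs : r ≠ s) (hb : b ≠ 0)
    (h : a * (1 - r * k) = b * (1 - s * k)) : (a - b) / (r * a - s * b) = k := by
  have hden : r * a - s * b ≠ 0 := by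
    intro h0
    have hab : a = b := by linear_combination h + k * h0
    rw [hab, ← sub_mul, mul_eq_zero] at h0
    exact hb (h0.resolve_left (sub_ne_zero.mpr hrs))
  rw [div_eq_iff hden]
  linear_combination h

theorem stmt_7_general (del al u0 r s t d : ℝ) (hdel : 0 < del) (hs2 : s < 0) (hr1 : 0 < r) (ht0 : t < 0)
    (hρ : 0 < (s + al) * (del * t - del * s - s * t * u0)
        / ((r + al) * (del * t - del * r - r * t * u0)))
    (hd : d = (1 / (r - s)) * Real.log ((s + al) * (del * t - del * s - s * t * u0)
        / ((r + al) * (del * t - del * r - r * t * u0)))) :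
    ((r + al) * Real.exp (r * d) - (s + al) * Real.exp (s * d))
        / (r * (r + al) * Real.exp (r * d) - s * (s + al) * Real.exp (s * d))
      = 1 / t + u0 / del := by
  have hrs : r ≠ s := (hs2.trans hr1).ne'
  have hbalance := exp_mul_mul_eq_of_eq_log_div hrs hρ hd
  have hsal : s + al ≠ 0 := left_ne_zero_of_mul (div_ne_zero_iff.mp hρ.ne').1
  rw [mul_assoc r, mul_assoc s]
  refine div_eq_of_mul_one_sub_eq hrs (mul_ne_zero hsal (exp_pos _).ne') ?_
  have ht : t ≠ 0 := ht0.ne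
  have hdel' : del ≠ 0 := hdel.ne'
  have hfactor (x : ℝ) :
      del * t - del * x - x * t * u0 = t * del * (1 - x * (1 / t + u0 / del)) := by
    field_simp
    ring
  rw [hfactor, hfactor] at hbalance
  refine mul_left_cancel₀ (mul_ne_zero ht hdel') ?_
  linear_combination hbalance

/-- With ρ = (s+α)(δt−δs−stu₀)/((r+α)(δt−δr−rtu₀)) > 0 and
d = (1/(r−s))·ln ρ, the threshold equation ψ₁(d)/ψ₁'(d) = 1/t + u₀/δ holds, i.e.
[(r+α)e^{rd} − (s+α)e^{sd}]/[r(r+α)e^{rd} − s(s+α)e^{sd}] = 1/t + u₀/δ. -/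
theorem stmt_7 (c lam del al u0 r s t d : ℝ) (hc : 0 < c) (hlam : 0 < lam)
    (hdel : 0 < del) (hal : 0 < al) (hu0 : 0 < u0) (hu0c : u0 < c)
    (hr : c * r ^ 2 - (lam + del - al * c) * r - al * del = 0)
    (hs : c * s ^ 2 - (lam + del - al * c) * s - al * del = 0)
    (hs1 : -al < s) (hs2 : s < 0) (hr1 : 0 < r)
    (ht0 : t < 0)
    (htr : (c - u0) * t ^ 2 - (lam + del - al * (c - u0)) * t - al * del = 0)
    (hne : (r + al) * (del * t - del * r - r * t * u0) ≠ 0)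
    (hρ : 0 < (s + al) * (del * t - del * s - s * t * u0)
        / ((r + al) * (del * t - del * r - r * t * u0)))
    (hd : d = (1 / (r - s)) * Real.log ((s + al) * (del * t - del * s - s * t * u0)
        / ((r + al) * (del * t - del * r - r * t * u0)))) :
    ((r + al) * Real.exp (r * d) - (s + al) * Real.exp (s * d))
        / (r * (r + al) * Real.exp (r * d) - s * (s + al) * Real.exp (s * d))
      = 1 / t + u0 / del :=
  stmt_7_general del al u0 r s t d hdel hs2 hr1 ht0 hρ hd
end

section
/- Under these hypotheses, the function Ψ satisfies, for every x ≥ d, the equation (g(x) − u₀)·Ψ'(x) − (λ+δ)·Ψ(x) + λ·∫₀ˣ Ψ(x−y)·α·e^{−α·y} dy + u₀ = 0, where at x = d the derivative Ψ'(d) equals 1. -/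
/-!
With `expConv α f x = ∫₀ˣ f (x - y) α e^{-α y} dy` one has `(expConv α f)' = α (f - expConv α f)`.
Two consequences give the theorem. First, `ψ₁'(d) > 0`: otherwise `N = g ψ₁' ≥ 0` attains its
minimum `0` at `d`, and `N' (d) = 0` together with `N d = 0` forces `ψ₁ d = 0 = expConv α ψ₁ d`,
contradicting strict monotonicity. Hence both pieces of `Ψ` have slope `1` at `d`, and matching
makes `Ψ` differentiable there. Second, the ODE for `ψ₂` says exactly that the residual
`E = (g - u₀) Ψ' - (λ + δ) Ψ + λ expConv α Ψ + u₀` satisfies `E' = -α E` on `[d, ∞)`, while the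
equation for `ψ₁` at `d` gives `E d = 0`; so `E` vanishes on `[d, ∞)`.
-/

open Set Filter Topology

noncomputable def expConv (α : ℝ) (f : ℝ → ℝ) (x : ℝ) : ℝ :=
  ∫ y in (0:ℝ)..x, f (x - y) * (α * Real.exp (-α * y))

section expConv

variable {α : ℝ} {f : ℝ → ℝ}

theorem expConv_eq (α : ℝ) (f : ℝ → ℝ) (x : ℝ) :
    expConv α f x = α * Real.exp (-α * x) * ∫ z in (0:ℝ)..x, f z * Real.exp (α * z) := by
  have h := intervalIntegral.integral_comp_sub_left (a := 0) (b := x)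
    (fun z => f z * (α * Real.exp (-α * (x - z)))) x
  simp only [sub_sub_cancel, sub_self, sub_zero] at h
  rw [expConv, h, ← intervalIntegral.integral_const_mul]
  refine intervalIntegral.integral_congr fun z _ => ?_
  rw [show -α * (x - z) = -α * x + α * z by ring, Real.exp_add]
  ring

theorem expConv_congr {g : ℝ → ℝ} {x : ℝ} (hx : 0 ≤ x) (hfg : EqOn f g (Icc 0 x)) :
    expConv α f x = expConv α g x := by
  rw [expConv_eq, expConv_eq, intervalIntegral.integral_congr]
  intro z hz
  rw [uIcc_of_le hx] at hz
  simp only [hfg hz]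

theorem expConv_div_const (c x : ℝ) :
    expConv α (fun z => f z / c) x = expConv α f x / c := by
  simp only [expConv, div_mul_eq_mul_div, intervalIntegral.integral_div]

theorem hasDerivAt_expConv (hf : ContinuousOn f (Ici 0)) {x : ℝ} (hx : 0 < x) :
    HasDerivAt (expConv α f) (α * (f x - expConv α f x)) x := by
  have hint : ContinuousOn (fun z => f z * Real.exp (α * z)) (Ici 0) :=
    hf.mul (by fun_prop)
  have hK : HasDerivAt (fun u => ∫ z in (0:ℝ)..u, f z * Real.exp (α * z))
      (f x * Real.exp (α * x)) x :=
    intervalIntegral.integral_hasDerivAt_right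
      ((hint.mono (by simp [uIcc_of_le hx.le, Icc_subset_Ici_self])).intervalIntegrable)
      (hint.mono Ioi_subset_Ici_self |>.stronglyMeasurableAtFilter isOpen_Ioi x hx)
      ((hint x hx.le).continuousAt (Ici_mem_nhds hx))
  have hexp : HasDerivAt (fun u => α * Real.exp (-α * u)) (α * (-α * Real.exp (-α * x))) x := by
    simpa [mul_comm] using ((hasDerivAt_id x).const_mul (-α)).exp.const_mul α
  rw [show expConv α f = _ from funext (expConv_eq α f)]
  refine (hexp.mul hK).congr_deriv ?_
  have : Real.exp (-α * x) * Real.exp (α * x) = 1 := by rw [← Real.exp_add]; simp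
  linear_combination (α * f x) * this

theorem expConv_neg (hα : 0 < α) {x : ℝ} (hx : 0 < x) (hf : ContinuousOn f (Icc 0 x))
    (hneg : ∀ z ∈ Ioo 0 x, f z < 0) : expConv α f x < 0 := by
  rw [expConv_eq]
  refine mul_neg_of_pos_of_neg (by positivity) ?_
  rw [← neg_pos, ← intervalIntegral.integral_neg]
  refine intervalIntegral.intervalIntegral_pos_of_pos_on ?_ (fun z hz => ?_) hx
  · exact ((hf.mul (by fun_prop)).neg).intervalIntegrable_of_Icc hx.le
  · exact neg_pos.2 (mul_neg_of_neg_of_pos (hneg z hz) (Real.exp_pos _))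

end expConv

theorem HasDerivAt.nonneg_of_monotoneOn_Ici {f : ℝ → ℝ} {f' a x : ℝ} (hx : a ≤ x)
    (hf : HasDerivAt f f' x) (hmono : MonotoneOn f (Ici a)) : 0 ≤ f' := by
  refine hf.hasDerivWithinAt.nonneg_of_monotoneOn ?_ hmono
  rw [accPt_principal_iff_nhdsWithin]
  exact (nhdsGT_neBot x).mono (nhdsWithin_mono x fun y (hy : x < y) => ⟨hx.trans hy.le, hy.ne'⟩)

theorem eq_zero_of_hasDerivAt_mul_self {f : ℝ → ℝ} {c a : ℝ}
    (hf : ∀ x ≥ a, HasDerivAt f (c * f x) x) (ha : f a = 0) : ∀ x ≥ a, f x = 0 := by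
  have hderiv : ∀ x ≥ a, HasDerivAt (fun y => Real.exp (-c * y) * f y) 0 x := by
    intro x hx
    have hexp : HasDerivAt (fun y => Real.exp (-c * y)) (-c * Real.exp (-c * x)) x := by
      simpa [mul_comm] using ((hasDerivAt_id x).const_mul (-c)).exp
    exact (hexp.mul (hf x hx)).congr_deriv (by ring)
  intro x hx
  have hconst := constant_of_has_deriv_right_zero
    (fun y hy => (hderiv y hy.1).continuousAt.continuousWithinAt)
    (fun y hy => (hderiv y hy.1).hasDerivWithinAt) x ⟨hx, le_rfl⟩
  simpa [ha] using hconst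

section Glue

variable {f h : ℝ → ℝ} {d : ℝ}

theorem hasDerivAt_ite_lt_self {a : ℝ} (hf : HasDerivAt f a d) (hh : HasDerivAt h a d)
    (hfh : f d = h d) : HasDerivAt (fun x => if x < d then f x else h x) a d := by
  have hleft : HasDerivWithinAt (fun x => if x < d then f x else h x) a (Iic d) d :=
    hf.hasDerivWithinAt.congr (fun y hy => by
      rcases (mem_Iic.1 hy).lt_or_eq with hlt | rfl
      · simp [hlt]
      · simp [hfh]) (by simp [hfh])
  have hright : HasDerivWithinAt (fun x => if x < d then f x else h x) a (Ici d) d :=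
    hh.hasDerivWithinAt.congr (fun y hy => by simp [not_lt.2 (mem_Ici.1 hy)]) (by simp)
  simpa [Iic_union_Ici] using hleft.union hright

theorem hasDerivAt_ite_lt_of_lt {a x : ℝ} (hx : d < x) (hh : HasDerivAt h a x) :
    HasDerivAt (fun y => if y < d then f y else h y) a x :=
  hh.congr_of_eventuallyEq <| (eventually_gt_nhds hx).mono fun y hy => by simp [not_lt.2 hy.le]

theorem continuousOn_ite_lt {s : Set ℝ} (hf : ContinuousOn f s) (hh : ContinuousOn h s)
    (hfh : f d = h d) : ContinuousOn (fun x => if x < d then f x else h x) s := by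
  refine ContinuousOn.if (fun x hx => ?_) (hf.mono inter_subset_left) (hh.mono inter_subset_left)
  rw [show x = d by simpa [Iio_def, frontier_Iio] using hx.2, hfh]

end Glue

theorem deriv_pos_of_strictMonoOn_of_integroDiff {lam del al d : ℝ} {g ψ ψ' : ℝ → ℝ}
    (hlam : lam ≠ 0) (hdel : del ≠ 0) (hal : 0 < al) (hd : 0 < d) (hg : ∀ x > 0, 0 ≤ g x)
    (hψ : ∀ x ≥ 0, HasDerivAt ψ (ψ' x) x) (hmono : StrictMonoOn ψ (Ici 0))
    (heq : ∀ x > 0, g x * ψ' x - (lam + del) * ψ x + lam * expConv al ψ x = 0) :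
    0 < ψ' d := by
  have hcont : ContinuousOn ψ (Ici 0) := fun x hx => (hψ x hx).continuousAt.continuousWithinAt
  have hnonneg : ∀ x ≥ 0, 0 ≤ ψ' x := fun x hx =>
    (hψ x hx).nonneg_of_monotoneOn_Ici hx hmono.monotoneOn
  refine (hnonneg d hd.le).lt_of_ne' fun hzero => ?_
  set N := fun x => (lam + del) * ψ x - lam * expConv al ψ x
  have hN : ∀ x > 0, N x = g x * ψ' x := fun x hx => by linarith [heq x hx]
  -- `N = g ψ' ≥ 0` near `d` vanishes at `d`, so `d` is a critical point of `N`.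
  have hmin : IsLocalMin N d := (eventually_gt_nhds hd).mono fun x hx => by
    rw [hN x hx, hN d hd, hzero, mul_zero]
    exact mul_nonneg (hg x hx) (hnonneg x hx.le)
  have hcrit := hmin.hasDerivAt_eq_zero
    (((hψ d hd.le).const_mul (lam + del)).sub ((hasDerivAt_expConv hcont hd).const_mul lam))
  have hNd := hN d hd
  simp only [N, hzero, mul_zero, zero_sub, neg_eq_zero, mul_eq_zero, hlam, hal.ne',
    false_or] at hcrit hNd
  have hψd : ψ d = 0 := by
    have : del * ψ d = 0 := by linear_combination hNd - lam * hcrit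
    simpa [hdel] using this
  have hconv : expConv al ψ d < 0 :=
    expConv_neg hal hd (hcont.mono Icc_subset_Ici_self) fun z hz =>
      hψd ▸ hmono hz.1.le hd.le hz.2
  linarith

theorem hasDerivAt_residual {lam del al u0 c x : ℝ} {g g' ψ ψ' ψ'' Ψ : ℝ → ℝ}
    (hdel : del ≠ 0) (hc : c ≠ 0) (hx : 0 < x) (hΨ : ContinuousOn Ψ (Ici 0))
    (hΨx : Ψ x = u0 / del + ψ x / c) (hΨ' : HasDerivAt Ψ (ψ' x / c) x)
    (hg : HasDerivAt g (g' x) x) (hψ' : HasDerivAt ψ' (ψ'' x) x)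
    (hode : (g x - u0) * ψ'' x + (al * (g x - u0) + g' x - (lam + del)) * ψ' x
      - al * del * ψ x = 0) :
    HasDerivAt (fun y => (g y - u0) * (ψ' y / c) - (lam + del) * Ψ y + lam * expConv al Ψ y + u0)
      (-al * ((g x - u0) * (ψ' x / c) - (lam + del) * Ψ x + lam * expConv al Ψ x + u0)) x := by
  refine (((((hg.sub_const u0).mul (hψ'.div_const c)).sub (hΨ'.const_mul (lam + del))).add
    ((hasDerivAt_expConv hΨ hx).const_mul lam)).add_const u0).congr_deriv ?_
  rw [hΨx]
  field_simp
  linear_combination del * hode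

theorem stmt_8_general (lam del al u0 d : ℝ)
    (g g' ψ₁ ψ₁' ψ₂ ψ₂' ψ₂'' Ψ : ℝ → ℝ)
    (hlam : 0 < lam) (hdel : 0 < del) (hal : 0 < al) (hu0 : 0 < u0)
    (hg : ∀ x ≥ (0:ℝ), HasDerivAt g (g' x) x)
    (hgu : ∀ x ≥ (0:ℝ), u0 < g x)
    (hψ₁d : ∀ x ≥ (0:ℝ), HasDerivAt ψ₁ (ψ₁' x) x)
    (hψ₁mono : StrictMonoOn ψ₁ (Set.Ici 0))
    (hψ₁eq : ∀ x > (0:ℝ),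
      g x * ψ₁' x - (lam + del) * ψ₁ x
        + lam * ∫ y in (0:ℝ)..x, ψ₁ (x - y) * (al * Real.exp (-al * y)) = 0)
    (hψ₂d : ∀ x ≥ (0:ℝ), HasDerivAt ψ₂ (ψ₂' x) x)
    (hψ₂d2 : ∀ x ≥ (0:ℝ), HasDerivAt ψ₂' (ψ₂'' x) x)
    (hψ₂eq : ∀ x > (0:ℝ),
      (g x - u0) * ψ₂'' x + (al * (g x - u0) + g' x - (lam + del)) * ψ₂' x
        - al * del * ψ₂ x = 0)
    (hd : 0 < d) (hψ₂'d : 0 < ψ₂' d)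
    (hmatch : ψ₁ d / ψ₁' d - ψ₂ d / ψ₂' d = u0 / del)
    (hΨ : ∀ x, Ψ x = if x < d then ψ₁ x / ψ₁' d else u0 / del + ψ₂ x / ψ₂' d) :
    ∀ x ≥ d,
      HasDerivAt Ψ (ψ₂' x / ψ₂' d) x ∧
      (g x - u0) * (ψ₂' x / ψ₂' d) - (lam + del) * Ψ x
        + lam * (∫ y in (0:ℝ)..x, Ψ (x - y) * (al * Real.exp (-al * y))) + u0 = 0 := by
  have hψ₁'d : 0 < ψ₁' d := deriv_pos_of_strictMonoOn_of_integroDiff hlam.ne' hdel.ne' hal hd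
    (fun x hx => (hu0.trans (hgu x hx.le)).le) hψ₁d hψ₁mono hψ₁eq
  set F : ℝ → ℝ := fun x => ψ₁ x / ψ₁' d
  set H : ℝ → ℝ := fun x => u0 / del + ψ₂ x / ψ₂' d
  have hΨFH : Ψ = fun x => if x < d then F x else H x := funext hΨ
  have hFH : F d = H d := by simp only [F, H]; linarith
  have hH : ∀ x ≥ 0, HasDerivAt H (ψ₂' x / ψ₂' d) x := fun x hx =>
    ((hψ₂d x hx).div_const _).const_add _
  have hΨ' : ∀ x ≥ d, HasDerivAt Ψ (ψ₂' x / ψ₂' d) x := by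
    intro x hx
    rw [hΨFH]
    rcases hx.eq_or_lt with rfl | hlt
    · refine hasDerivAt_ite_lt_self ?_ (hH d hd.le) hFH
      rw [div_self hψ₂'d.ne', ← div_self hψ₁'d.ne']
      exact (hψ₁d d hd.le).div_const _
    · exact hasDerivAt_ite_lt_of_lt hlt (hH x (hd.le.trans hx))
  have hΨc : ContinuousOn Ψ (Ici 0) := hΨFH ▸ continuousOn_ite_lt
    (fun x hx => ((hψ₁d x hx).continuousAt.div_const _).continuousWithinAt)
    (fun x hx => (hH x hx).continuousAt.continuousWithinAt) hFH
  have hΨF : EqOn Ψ F (Icc 0 d) := fun x hx => by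
    rcases hx.2.lt_or_eq with hlt | rfl
    · simp [hΨFH, hlt]
    · simp [hΨFH, hFH]
  set E : ℝ → ℝ := fun y =>
    (g y - u0) * (ψ₂' y / ψ₂' d) - (lam + del) * Ψ y + lam * expConv al Ψ y + u0
  have hEd : E d = 0 := by
    simp only [E]
    rw [expConv_congr hd.le hΨF, expConv_div_const, hΨF ⟨hd.le, le_rfl⟩, div_self hψ₂'d.ne']
    have heqd : g d * ψ₁' d - (lam + del) * ψ₁ d + lam * expConv al ψ₁ d = 0 := hψ₁eq d hd
    simp only [F]
    field_simp
    linear_combination heqd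
  refine fun x hx => ⟨hΨ' x hx,
    eq_zero_of_hasDerivAt_mul_self (f := E) (c := -al) (fun y hy => ?_) hEd x hx⟩
  have hy0 : 0 < y := hd.trans_le hy
  exact hasDerivAt_residual hdel.ne' hψ₂'d.ne' hy0 hΨc (by simp [hΨFH, not_lt.2 hy, H])
    (hΨ' y hy) (hg y hy0.le) (hψ₂d2 y hy0.le) (hψ₂eq y hy0)

/-- Under the hypotheses of Theorem 3.3 (Hypothesis A plus the matching
condition), the value-function candidate Ψ satisfies, for every x ≥ d,
(g(x) − u₀)·Ψ'(x) − (λ+δ)·Ψ(x) + λ·∫₀ˣ Ψ(x−y)·α·e^{−αy} dy + u₀ = 0, where at x = d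
the derivative Ψ'(d) = ψ₂'(d)/ψ₂'(d) equals 1. -/
theorem stmt_8 (lam del al u0 d : ℝ)
    (g g' ψ₁ ψ₁' ψ₂ ψ₂' ψ₂'' Ψ : ℝ → ℝ)
    (hlam : 0 < lam) (hdel : 0 < del) (hal : 0 < al) (hu0 : 0 < u0)
    (hg : ∀ x ≥ (0:ℝ), HasDerivAt g (g' x) x)
    (hg'c : ContinuousOn g' (Set.Ici 0))
    (hgu : ∀ x ≥ (0:ℝ), u0 < g x)
    (hψ₁d : ∀ x ≥ (0:ℝ), HasDerivAt ψ₁ (ψ₁' x) x)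
    (hψ₁'c : ContinuousOn ψ₁' (Set.Ici 0))
    (hψ₁mono : StrictMonoOn ψ₁ (Set.Ici 0))
    (hψ₁eq : ∀ x > (0:ℝ),
      g x * ψ₁' x - (lam + del) * ψ₁ x
        + lam * ∫ y in (0:ℝ)..x, ψ₁ (x - y) * (al * Real.exp (-al * y)) = 0)
    (hψ₂bdd : ∃ M : ℝ, ∀ x ≥ (0:ℝ), |ψ₂ x| ≤ M)
    (hψ₂d : ∀ x ≥ (0:ℝ), HasDerivAt ψ₂ (ψ₂' x) x)
    (hψ₂d2 : ∀ x ≥ (0:ℝ), HasDerivAt ψ₂' (ψ₂'' x) x)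
    (hψ₂''c : ContinuousOn ψ₂'' (Set.Ici 0))
    (hψ₂conc : ConcaveOn ℝ (Set.Ici 0) ψ₂)
    (hψ₂eq : ∀ x > (0:ℝ),
      (g x - u0) * ψ₂'' x + (al * (g x - u0) + g' x - (lam + del)) * ψ₂' x
        - al * del * ψ₂ x = 0)
    (hd : 0 < d) (hψ₂'d : 0 < ψ₂' d)
    (hmatch : ψ₁ d / ψ₁' d - ψ₂ d / ψ₂' d = u0 / del)
    (hΨ : ∀ x, Ψ x = if x < d then ψ₁ x / ψ₁' d else u0 / del + ψ₂ x / ψ₂' d) :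
    ∀ x ≥ d,
      HasDerivAt Ψ (ψ₂' x / ψ₂' d) x ∧
      (g x - u0) * (ψ₂' x / ψ₂' d) - (lam + del) * Ψ x
        + lam * (∫ y in (0:ℝ)..x, Ψ (x - y) * (al * Real.exp (-al * y))) + u0 = 0 :=
  stmt_8_general lam del al u0 d g g' ψ₁ ψ₁' ψ₂ ψ₂' ψ₂'' Ψ hlam hdel hal hu0 hg hgu hψ₁d hψ₁mono
    hψ₁eq hψ₂d hψ₂d2 hψ₂eq hd hψ₂'d hmatch hΨ
end

section
/- For every x ≥ d, e^{α·x}·[(g(x)−u₀)·ψ₂'(x) − (λ+δ)·ψ₂(x)] + α·λ·∫_d^x e^{α·y}·ψ₂(y) dy = e^{α·d}·[(g(d)−u₀)·ψ₂'(d) − (λ+δ)·ψ₂(d)]; equivalently, with h(x) := α·e^{−αx}·∫_d^x e^{αy}·ψ₂(y) dy, the function x ↦ e^{αx}·[(g(x)−u₀)·ψ₂'(x) − (λ+δ)·ψ₂(x) + λ·h(x)] is constant on [d, ∞). -/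
/-!
Let `F(x) = e^{αx}[(g(x)−u₀)ψ₂'(x) − (λ+δ)ψ₂(x)] + αλ∫_d^x e^{αy}ψ₂(y) dy`. Differentiating,
`F'(x)` is `e^{αx}` times the left-hand side of the differential equation, so `F' = 0` on
`(d, ∞)`; as `F` is continuous on `[d, ∞)`, the mean value theorem makes it constant there.
The second identity is the first one multiplied out, using `e^{αx} e^{−αx} = 1`.
-/

open Set Real

theorem eq_of_continuousOn_Icc_of_hasDerivAt_zero {f : ℝ → ℝ} {a b : ℝ} (hab : a ≤ b)
    (hf : ContinuousOn f (Icc a b)) (hf' : ∀ x ∈ Ioo a b, HasDerivAt f 0 x) : f b = f a := by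
  rcases hab.eq_or_lt with rfl | hlt
  · rfl
  obtain ⟨c, -, hslope⟩ := exists_hasDerivAt_eq_slope f (fun _ => 0) hlt hf hf'
  exact sub_eq_zero.mp ((div_eq_zero_iff.mp hslope.symm).resolve_right (sub_ne_zero.mpr hlt.ne'))

theorem ContinuousOn.hasDerivAt_primitive_of_Ici {φ : ℝ → ℝ} {a x : ℝ}
    (hφ : ContinuousOn φ (Ici a)) (hx : a < x) :
    HasDerivAt (fun u => ∫ y in a..u, φ y) (φ x) x := by
  have hφ' : ContinuousOn φ (Ioi a) := hφ.mono Ioi_subset_Ici_self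
  exact intervalIntegral.integral_hasDerivAt_right
    ((hφ.mono Icc_subset_Ici_self).intervalIntegrable_of_Icc hx.le)
    (hφ'.stronglyMeasurableAtFilter isOpen_Ioi x hx)
    (hφ'.continuousAt (isOpen_Ioi.mem_nhds hx))

section FirstIntegral

variable (lam del al u0 d : ℝ) (g ψ ψ' : ℝ → ℝ)

noncomputable def firstIntegral (x : ℝ) : ℝ :=
  exp (al * x) * ((g x - u0) * ψ' x - (lam + del) * ψ x)
    + al * lam * ∫ y in d..x, exp (al * y) * ψ y

variable {lam del al u0 d g ψ ψ'}

theorem hasDerivAt_firstIntegral {g'x ψ''x x : ℝ} (hx : d < x)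
    (hg : HasDerivAt g g'x x) (hψ : HasDerivAt ψ (ψ' x) x) (hψ' : HasDerivAt ψ' ψ''x x)
    (hψc : ContinuousOn ψ (Ici d)) :
    HasDerivAt (firstIntegral lam del al u0 d g ψ ψ')
      (exp (al * x) * ((g x - u0) * ψ''x + (al * (g x - u0) + g'x - (lam + del)) * ψ' x
        - al * del * ψ x)) x := by
  have hexp : HasDerivAt (fun u => exp (al * u)) (exp (al * x) * al) x := by
    simpa using ((hasDerivAt_id x).const_mul al).exp
  have hbracket := ((hg.sub_const u0).mul hψ').sub (hψ.const_mul (lam + del))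
  have hprim := ((continuous_exp.comp (continuous_const_mul al)).continuousOn.mul
    hψc).hasDerivAt_primitive_of_Ici hx
  refine ((hexp.mul hbracket).add (hprim.const_mul (al * lam))).congr_deriv ?_
  simp only [Pi.mul_apply, Pi.sub_apply, Function.comp_apply]
  ring

theorem firstIntegral_eq_of_ode {g' ψ'' : ℝ → ℝ}
    (hg : ∀ x ≥ d, HasDerivAt g (g' x) x) (hψ : ∀ x ≥ d, HasDerivAt ψ (ψ' x) x)
    (hψ' : ∀ x ≥ d, HasDerivAt ψ' (ψ'' x) x)
    (heq : ∀ x > d,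
      (g x - u0) * ψ'' x + (al * (g x - u0) + g' x - (lam + del)) * ψ' x - al * del * ψ x = 0) :
    ∀ x ≥ d, firstIntegral lam del al u0 d g ψ ψ' x = firstIntegral lam del al u0 d g ψ ψ' d := by
  intro b hb
  have hgc : ContinuousOn g (Ici d) := HasDerivAt.continuousOn hg
  have hψc : ContinuousOn ψ (Ici d) := HasDerivAt.continuousOn hψ
  have hψ'c : ContinuousOn ψ' (Ici d) := HasDerivAt.continuousOn hψ'
  have hexpc : Continuous fun x => exp (al * x) := by fun_prop
  refine eq_of_continuousOn_Icc_of_hasDerivAt_zero hb ?_ fun x hx => ?_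
  · have hsub : Icc d b ⊆ Ici d := Icc_subset_Ici_self
    have hprim : ContinuousOn (fun x => ∫ y in d..x, exp (al * y) * ψ y) (Icc d b) := by
      rw [← uIcc_of_le hb]
      exact intervalIntegral.continuousOn_primitive_interval
        (((hexpc.continuousOn.mul hψc).mono (uIcc_of_le hb ▸ hsub)).integrableOn_compact
          isCompact_uIcc)
    exact (hexpc.continuousOn.mul ((((hgc.mono hsub).sub continuousOn_const).mul
      (hψ'c.mono hsub)).sub (continuousOn_const.mul (hψc.mono hsub)))).add
      (continuousOn_const.mul hprim)
  · rw [← mul_zero (exp (al * x)), ← heq x hx.1]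
    exact hasDerivAt_firstIntegral hx.1 (hg x hx.1.le) (hψ x hx.1.le) (hψ' x hx.1.le) hψc

end FirstIntegral

theorem stmt_10_general (lam del al u0 d : ℝ) (g g' ψ₂ ψ₂' ψ₂'' : ℝ → ℝ)
    (hg : ∀ x ≥ d, HasDerivAt g (g' x) x)
    (hψ₂d : ∀ x ≥ d, HasDerivAt ψ₂ (ψ₂' x) x)
    (hψ₂d2 : ∀ x ≥ d, HasDerivAt ψ₂' (ψ₂'' x) x)
    (heq : ∀ x > d,
      (g x - u0) * ψ₂'' x + (al * (g x - u0) + g' x - (lam + del)) * ψ₂' x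
        - al * del * ψ₂ x = 0) :
    ∀ x ≥ d,
      Real.exp (al * x) * ((g x - u0) * ψ₂' x - (lam + del) * ψ₂ x)
          + al * lam * ∫ y in d..x, Real.exp (al * y) * ψ₂ y
        = Real.exp (al * d) * ((g d - u0) * ψ₂' d - (lam + del) * ψ₂ d) ∧
      Real.exp (al * x) * ((g x - u0) * ψ₂' x - (lam + del) * ψ₂ x
            + lam * (al * Real.exp (-al * x) * ∫ y in d..x, Real.exp (al * y) * ψ₂ y))
        = Real.exp (al * d) * ((g d - u0) * ψ₂' d - (lam + del) * ψ₂ d) := by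
  intro x hx
  have hconst := firstIntegral_eq_of_ode hg hψ₂d hψ₂d2 heq x hx
  simp only [firstIntegral, intervalIntegral.integral_same, mul_zero, add_zero] at hconst
  refine ⟨hconst, ?_⟩
  have hexp : exp (al * x) * exp (-al * x) = 1 := by rw [← exp_add]; simp
  linear_combination hconst + lam * al * (∫ y in d..x, exp (al * y) * ψ₂ y) * hexp

/-- For every x ≥ d,
e^{αx}[(g(x)−u₀)ψ₂'(x) − (λ+δ)ψ₂(x)] + αλ∫_d^x e^{αy}ψ₂(y)dy
  = e^{αd}[(g(d)−u₀)ψ₂'(d) − (λ+δ)ψ₂(d)]; equivalently, with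
h(x) = αe^{−αx}∫_d^x e^{αy}ψ₂(y)dy, the function
x ↦ e^{αx}[(g(x)−u₀)ψ₂'(x) − (λ+δ)ψ₂(x) + λh(x)] is constant on [d,∞). -/
theorem stmt_10 (lam del al u0 d : ℝ) (g g' ψ₂ ψ₂' ψ₂'' : ℝ → ℝ)
    (hlam : 0 < lam) (hdel : 0 < del) (hal : 0 < al) (hu0 : 0 < u0)
    (hg : ∀ x ≥ d, HasDerivAt g (g' x) x)
    (hg'c : ContinuousOn g' (Set.Ici d))
    (hψ₂d : ∀ x ≥ d, HasDerivAt ψ₂ (ψ₂' x) x)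
    (hψ₂d2 : ∀ x ≥ d, HasDerivAt ψ₂' (ψ₂'' x) x)
    (hψ₂''c : ContinuousOn ψ₂'' (Set.Ici d))
    (heq : ∀ x > d,
      (g x - u0) * ψ₂'' x + (al * (g x - u0) + g' x - (lam + del)) * ψ₂' x
        - al * del * ψ₂ x = 0) :
    ∀ x ≥ d,
      Real.exp (al * x) * ((g x - u0) * ψ₂' x - (lam + del) * ψ₂ x)
          + al * lam * ∫ y in d..x, Real.exp (al * y) * ψ₂ y
        = Real.exp (al * d) * ((g d - u0) * ψ₂' d - (lam + del) * ψ₂ d) ∧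
      Real.exp (al * x) * ((g x - u0) * ψ₂' x - (lam + del) * ψ₂ x
            + lam * (al * Real.exp (-al * x) * ∫ y in d..x, Real.exp (al * y) * ψ₂ y))
        = Real.exp (al * d) * ((g d - u0) * ψ₂' d - (lam + del) * ψ₂ d) :=
  stmt_10_general lam del al u0 d g g' ψ₂ ψ₂' ψ₂'' hg hψ₂d hψ₂d2 heq
end

section
/- For every x > b, (α·g(x) + g'(x) − (λ+δ)) − α·δ·(x − b + ψ(b)/ψ'(b)) ≤ 0; equivalently, since Φ'(x) = 1 and Φ''(x) = 0 on (b,∞), the function Φ satisfies g(x)·Φ''(x) + (α·g(x) + g'(x) − (λ+δ))·Φ'(x) − α·δ·Φ(x) ≤ 0 for all x > b. -/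
open Set intervalIntegral Filter Topology MeasureTheory

/-- For every x > b,
(αg(x) + g'(x) − (λ+δ)) − αδ(x − b + ψ(b)/ψ'(b)) ≤ 0; equivalently, since Φ'(x) = 1 and
Φ''(x) = 0 on (b,∞), Φ satisfies g(x)Φ''(x) + (αg(x)+g'(x)−(λ+δ))Φ'(x) − αδΦ(x) ≤ 0 for
all x > b. -/
theorem stmt_13 (lam del al b : ℝ) (g g' ψ ψ' ψ'' Φ : ℝ → ℝ)
    (hlam : 0 < lam) (hdel : 0 < del) (hal : 0 < al)
    (hg : ∀ x ≥ (0:ℝ), HasDerivAt g (g' x) x)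
    (hg'c : ContinuousOn g' (Set.Ici 0))
    (hgpos : ∀ x ≥ (0:ℝ), 0 ≤ g x)
    (hψd : ∀ x ≥ (0:ℝ), HasDerivAt ψ (ψ' x) x)
    (hψd2 : ∀ x ≥ (0:ℝ), HasDerivAt ψ' (ψ'' x) x)
    (hψ''c : ContinuousOn ψ'' (Set.Ici 0))
    (hψmono : StrictMonoOn ψ (Set.Ici 0))
    (hψ0 : 0 ≤ ψ 0)
    (hψeq : ∀ x > (0:ℝ),
      g x * ψ' x - (lam + del) * ψ x
        + lam * ∫ y in (0:ℝ)..x, ψ (x - y) * (al * Real.exp (-al * y)) = 0)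
    (hb : 0 < b)
    (hbmin : ∀ x ≥ (0:ℝ), ψ' b ≤ ψ' x)
    (hψ'' : ∀ x > b, 0 ≤ ψ'' x)
    (hΦ : ∀ x, Φ x = if x ≤ b then ψ x / ψ' b else x - b + ψ b / ψ' b) :
    ∀ x > b,
      (al * g x + g' x - (lam + del)) - al * del * (x - b + ψ b / ψ' b) ≤ 0 ∧
      g x * deriv (deriv Φ) x + (al * g x + g' x - (lam + del)) * deriv Φ x
        - al * del * Φ x ≤ 0 := by
  -- continuity facts
  have hψc : ∀ x ≥ (0:ℝ), ContinuousAt ψ x := fun x hx => (hψd x hx).continuousAt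
  have hψ'c : ∀ x ≥ (0:ℝ), ContinuousAt ψ' x := fun x hx => (hψd2 x hx).continuousAt
  set c : ℝ := ψ b / ψ' b with hc
  -- the integrand after substitution
  set f : ℝ → ℝ := fun u => ψ u * Real.exp (al * u) with hf
  have hfc : ∀ u ≥ (0:ℝ), ContinuousAt f u := fun u hu =>
    (hψc u hu).mul (Real.continuous_exp.continuousAt.comp (by fun_prop))
  set J : ℝ → ℝ := fun x => ∫ u in (0:ℝ)..x, f u with hJ
  have hJd : ∀ x > (0:ℝ), HasDerivAt J (f x) x := by
    intro x hx
    refine intervalIntegral.integral_hasDerivAt_right ?_ ?_ (hfc x hx.le)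
    · apply ContinuousOn.intervalIntegrable
      intro u hu
      rw [Set.uIcc_of_le hx.le] at hu
      exact (hfc u hu.1).continuousWithinAt
    · exact ContinuousAt.stronglyMeasurableAtFilter isOpen_Ioi
        (fun u hu => hfc u (le_of_lt hu)) x hx
  -- rewrite the convolution integral
  have hIeq : ∀ x > (0:ℝ),
      (∫ y in (0:ℝ)..x, ψ (x - y) * (al * Real.exp (-al * y)))
        = al * Real.exp (-al * x) * J x := by
    intro x hx
    have h1 : ∀ y : ℝ, ψ (x - y) * (al * Real.exp (-al * y))
        = (fun u => al * Real.exp (-al * x) * f u) (x - y) := by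
      intro y
      simp only [hf]
      have h2 : Real.exp (-al * x) * Real.exp (al * (x - y)) = Real.exp (-al * y) := by
        rw [← Real.exp_add]; congr 1; ring
      rw [← h2]; ring
    have h2 := intervalIntegral.integral_comp_sub_left
      (a := 0) (b := x) (fun u => al * Real.exp (-al * x) * f u) x
    rw [sub_self, sub_zero] at h2
    calc (∫ y in (0:ℝ)..x, ψ (x - y) * (al * Real.exp (-al * y)))
        = ∫ y in (0:ℝ)..x, (fun u => al * Real.exp (-al * x) * f u) (x - y) := by
          simp only [h1]
      _ = ∫ u in (0:ℝ)..x, al * Real.exp (-al * x) * f u := h2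
      _ = al * Real.exp (-al * x) * J x := by
          rw [intervalIntegral.integral_const_mul]
  -- the second-order ODE
  have hODE : ∀ x > (0:ℝ),
      g x * ψ'' x + (al * g x + g' x - (lam + del)) * ψ' x - al * del * ψ x = 0 := by
    intro x hx
    have hK : lam * (al * Real.exp (-al * x) * J x) = (lam + del) * ψ x - g x * ψ' x := by
      have := hψeq x hx
      rw [hIeq x hx] at this
      linarith
    -- the function F is identically 0 near x
    have hF0 : ∀ᶠ y in 𝓝 x, g y * ψ' y - (lam + del) * ψ y
        + lam * (al * Real.exp (-al * y) * J y) = 0 := by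
      filter_upwards [isOpen_Ioi.mem_nhds hx] with y hy
      have := hψeq y hy
      rw [hIeq y hy] at this
      exact this
    have hexp : HasDerivAt (fun y => Real.exp (-al * y)) (Real.exp (-al * x) * (-al)) x := by
      have h1 : HasDerivAt (fun y : ℝ => -al * y) (-al) x := by
        simpa using (hasDerivAt_id x).const_mul (-al)
      exact (Real.hasDerivAt_exp (-al * x)).comp x h1
    have hD : HasDerivAt (fun y => g y * ψ' y - (lam + del) * ψ y
        + lam * (al * Real.exp (-al * y) * J y))
        ((g' x * ψ' x + g x * ψ'' x) - (lam + del) * ψ' x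
          + lam * ((al * (Real.exp (-al * x) * (-al))) * J x
            + (al * Real.exp (-al * x)) * f x)) x := by
      exact (((hg x hx.le).mul (hψd2 x hx.le)).sub ((hψd x hx.le).const_mul (lam + del))).add
        (((hexp.const_mul al).mul (hJd x hx)).const_mul lam)
    have hD0 : HasDerivAt (fun y => g y * ψ' y - (lam + del) * ψ y
        + lam * (al * Real.exp (-al * y) * J y)) 0 x :=
      (hasDerivAt_const x 0).congr_of_eventuallyEq hF0
    have heq := hD.unique hD0
    have hexp1 : Real.exp (-al * x) * Real.exp (al * x) = 1 := by
      rw [← Real.exp_add]; ring_nf; exact Real.exp_zero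
    simp only [hf] at heq
    linear_combination heq + al * hK - lam * al * ψ x * hexp1
  -- ψ'' b = 0
  have hψ''b : ψ'' b = 0 := by
    have hmin : IsLocalMin ψ' b := by
      filter_upwards [isOpen_Ioi.mem_nhds hb] with y hy
      exact hbmin y (le_of_lt hy)
    exact hmin.hasDerivAt_eq_zero (hψd2 b hb.le)
  have hψb : 0 < ψ b := lt_of_le_of_lt hψ0 (hψmono Set.self_mem_Ici hb.le hb)
  -- ψ' b ≥ 0 via slopes
  have hψ'bnn : 0 ≤ ψ' b := by
    have hslope : Tendsto (slope ψ b) (𝓝[>] b) (𝓝 (ψ' b)) :=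
      (hasDerivAt_iff_tendsto_slope.1 (hψd b hb.le)).mono_left
        (nhdsWithin_mono b fun y hy => ne_of_gt hy)
    refine ge_of_tendsto hslope ?_
    filter_upwards [self_mem_nhdsWithin] with y hy
    have : ψ b < ψ y := hψmono hb.le (hb.trans hy).le hy
    have hyb : 0 < y - b := sub_pos.2 hy
    rw [slope_def_field]
    exact le_of_lt (div_pos (by linarith) hyb)
  -- ψ' b > 0
  have hψ'b : 0 < ψ' b := by
    rcases hψ'bnn.lt_or_eq with h | h
    · exact h
    · exfalso
      have := hODE b hb
      rw [hψ''b, ← h] at this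
      nlinarith [mul_pos (mul_pos hal hdel) hψb]
  intro x hx
  have hx0 : (0:ℝ) < x := hb.trans hx
  -- ψ' monotone on [b, x]
  have hmono : MonotoneOn ψ' (Set.Icc b x) := by
    have hi : interior (Set.Icc b x) = Set.Ioo b x := interior_Icc
    refine monotoneOn_of_deriv_nonneg (convex_Icc b x) ?_ ?_ ?_
    · exact fun y hy => (hψ'c y (hb.le.trans hy.1)).continuousWithinAt
    · rw [hi]
      exact fun y hy => ((hψd2 y (hb.trans hy.1).le).differentiableAt).differentiableWithinAt
    · rw [hi]
      intro y hy
      rw [(hψd2 y (hb.trans hy.1).le).deriv]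
      exact hψ'' y hy.1
  -- mean value theorem : ψ x ≤ ψ b + ψ' x * (x - b)
  have hmvt : ψ x ≤ ψ b + ψ' x * (x - b) := by
    obtain ⟨t, ht, hts⟩ := exists_hasDerivAt_eq_slope ψ ψ' hx
      (fun y hy => (hψc y (hb.le.trans hy.1)).continuousWithinAt)
      (fun y hy => hψd y (hb.trans hy.1).le)
    have h1 : ψ' t ≤ ψ' x := hmono ⟨ht.1.le, ht.2.le⟩ ⟨hx.le, le_rfl⟩ ht.2.le
    have hxb : 0 < x - b := sub_pos.2 hx
    have : ψ x - ψ b = ψ' t * (x - b) := by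
      field_simp at hts
      linarith [hts]
    nlinarith
  have hψ'x : ψ' b ≤ ψ' x := hbmin x hx0.le
  have hcψ : ψ' b * c = ψ b := by
    rw [hc]; field_simp
  have hodx := hODE x hx0
  have hgx : 0 ≤ g x := hgpos x hx0.le
  have hψ''x : 0 ≤ ψ'' x := hψ'' x hx
  have hcpos : 0 < c := div_pos hψb hψ'b
  have key : (al * g x + g' x - (lam + del)) - al * del * (x - b + c) ≤ 0 := by
    have h1 : (al * g x + g' x - (lam + del)) * ψ' x ≤ al * del * ψ x := by nlinarith
    have h0 : ψ x ≤ (x - b + c) * ψ' x := by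
      nlinarith [mul_le_mul_of_nonneg_right hψ'x hcpos.le]
    have h2 : al * del * ψ x ≤ al * del * ((x - b + c) * ψ' x) :=
      mul_le_mul_of_nonneg_left h0 (mul_pos hal hdel).le
    have h3 : 0 < ψ' x := lt_of_lt_of_le hψ'b hψ'x
    nlinarith [h1, h2, h3]
  refine ⟨key, ?_⟩
  -- Φ near x equals the linear function
  have hΦev : ∀ᶠ y in 𝓝 x, Φ y = y - b + c := by
    filter_upwards [isOpen_Ioi.mem_nhds hx] with y hy
    rw [hΦ y, if_neg (not_le.2 hy)]
  have hΦd : ∀ y > b, HasDerivAt Φ 1 y := by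
    intro y hy
    have hlin : HasDerivAt (fun z : ℝ => z - b + c) 1 y := by
      simpa using ((hasDerivAt_id y).sub_const b).add_const c
    refine hlin.congr_of_eventuallyEq ?_
    filter_upwards [isOpen_Ioi.mem_nhds hy] with z hz
    rw [hΦ z, if_neg (not_le.2 hz)]
  have hdΦ : deriv Φ x = 1 := (hΦd x hx).deriv
  have hdΦev : deriv Φ =ᶠ[𝓝 x] fun _ => 1 := by
    filter_upwards [isOpen_Ioi.mem_nhds hx] with y hy
    exact (hΦd y hy).deriv
  have hd2 : deriv (deriv Φ) x = 0 := by
    rw [hdΦev.deriv_eq]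
    exact deriv_const x 1
  have hΦx : Φ x = x - b + c := by rw [hΦ x, if_neg (not_le.2 hx)]
  rw [hd2, hdΦ, hΦx]
  linarith
end

section
/- Φ is continuously differentiable on (0,∞) with Φ'(b) = 1 and Φ'(x) ≥ 1 for all x > 0, and Φ solves the quasi-variational inequality of the singular dividend control problem: for every x > 0, max{ g(x)·Φ'(x) − (λ+δ)·Φ(x) + λ·∫₀ˣ Φ(x−y)·α·e^{−αy} dy , 1 − Φ'(x) } = 0. -/
/-! On `[0, b]`, `Φ` is the multiple `ψ / ψ'(b)` of `ψ`, so the equation holds there with equality,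
and `Φ' = ψ' / ψ'(b) ≥ 1` because `ψ'(b)` is the minimum of `ψ'`; it is positive by the equation
at `b`. Multiplying the convolution by `e^{αx}` turns `e^{αx} (𝓛 - δ) F (x)` into a differentiable
function of `x` with derivative `e^{αx} (g F'' + (g' + α g - λ - δ) F' - δ α F)`. For `ψ` this
vanishes, which is a second-order ODE for `ψ`. For `Φ` beyond `b` (where `Φ' = 1`, `Φ'' = 0`) the
ODE, `ψ'' ≥ 0` and the tangent-line bound `ψ ≤ ψ' Φ` make it nonpositive, so
`e^{αx} (𝓛 - δ) Φ (x)` decreases from its value `0` at `b`. -/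

open Set intervalIntegral Real

noncomputable section

namespace SingularDividend

/-- `(𝓛 - δ) F` of the paper, with the derivative of `F` supplied as `F'`. -/
def generator (lam del al : ℝ) (g F F' : ℝ → ℝ) (x : ℝ) : ℝ :=
  g x * F' x - (lam + del) * F x + lam * ∫ y in (0:ℝ)..x, F (x - y) * (al * exp (-al * y))

def valueFunction (ψ ψ' : ℝ → ℝ) (b x : ℝ) : ℝ :=
  if x ≤ b then ψ x / ψ' b else x - b + ψ b / ψ' b

theorem integral_comp_sub_mul_exp (al x : ℝ) (F : ℝ → ℝ) :
    ∫ y in (0:ℝ)..x, F (x - y) * (al * exp (-al * y))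
      = al * exp (-al * x) * ∫ u in (0:ℝ)..x, F u * exp (al * u) := by
  have hsub := integral_comp_sub_left (a := 0) (b := x)
    (fun u => F u * (al * exp (-al * (x - u)))) x
  simp only [sub_sub_cancel, sub_self, sub_zero] at hsub
  rw [hsub, ← intervalIntegral.integral_const_mul]
  refine integral_congr fun u _ => ?_
  simp only [show -al * (x - u) = -al * x + al * u by ring, exp_add]
  ring

theorem exp_mul_generator (lam del al : ℝ) (g F F' : ℝ → ℝ) (x : ℝ) :
    exp (al * x) * generator lam del al g F F' x
      = exp (al * x) * (g x * F' x - (lam + del) * F x)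
        + lam * al * ∫ u in (0:ℝ)..x, F u * exp (al * u) := by
  have h : exp (al * x) * exp (-al * x) = 1 := by rw [← exp_add]; simp
  rw [generator, integral_comp_sub_mul_exp]
  linear_combination (lam * al * ∫ u in (0:ℝ)..x, F u * exp (al * u)) * h

theorem hasDerivAt_integral_mul_exp {F : ℝ → ℝ} (al : ℝ) (hF : ContinuousOn F (Ici 0))
    {t : ℝ} (ht : 0 < t) :
    HasDerivAt (fun s => ∫ u in (0:ℝ)..s, F u * exp (al * u)) (F t * exp (al * t)) t := by
  have hcont : ContinuousOn (fun u => F u * exp (al * u)) (Ici 0) := hF.mul (by fun_prop)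
  refine integral_hasDerivAt_right ?_ ?_ ?_
  · exact (hcont.mono (by simp [uIcc_of_le ht.le, Icc_subset_Ici_self])).intervalIntegrable
  · exact (hcont.mono Ioi_subset_Ici_self).stronglyMeasurableAtFilter isOpen_Ioi t ht
  · exact hcont.continuousAt (Ici_mem_nhds ht)

theorem hasDerivAt_exp_mul_generator {lam del al t g't F''t : ℝ} {g F F' : ℝ → ℝ}
    (hFc : ContinuousOn F (Ici 0)) (ht : 0 < t) (hg : HasDerivAt g g't t)
    (hF : HasDerivAt F (F' t) t) (hF' : HasDerivAt F' F''t t) :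
    HasDerivAt (fun s => exp (al * s) * generator lam del al g F F' s)
      (exp (al * t) * (g t * F''t + (g't + al * g t - (lam + del)) * F' t - del * al * F t))
      t := by
  simp only [exp_mul_generator]
  have hexp : HasDerivAt (fun s => exp (al * s)) (exp (al * t) * al) t :=
    ((hasDerivAt_id t).const_mul al).exp.congr_deriv (by simp)
  have h : HasDerivAt (fun s => exp (al * s) * (g s * F' s - (lam + del) * F s)
      + lam * al * ∫ u in (0:ℝ)..s, F u * exp (al * u))
      (exp (al * t) * al * (g t * F' t - (lam + del) * F t)
        + exp (al * t) * (g't * F' t + g t * F''t - (lam + del) * F' t)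
        + lam * al * (F t * exp (al * t))) t :=
    (hexp.mul ((hg.mul hF').sub (hF.const_mul (lam + del)))).add
      ((hasDerivAt_integral_mul_exp al hFc ht).const_mul (lam * al))
  convert h using 1
  ring

theorem generator_congr_smul {lam del al x c : ℝ} {g F F' G G' : ℝ → ℝ} (hx : 0 ≤ x)
    (hFG : ∀ y ∈ Icc 0 x, F y = c * G y) (hF' : F' x = c * G' x) :
    generator lam del al g F F' x = c * generator lam del al g G G' x := by
  have hint : ∫ y in (0:ℝ)..x, F (x - y) * (al * exp (-al * y))
      = c * ∫ y in (0:ℝ)..x, G (x - y) * (al * exp (-al * y)) := by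
    rw [← intervalIntegral.integral_const_mul]
    refine integral_congr fun y hy => ?_
    rw [uIcc_of_le hx] at hy
    simp only [hFG (x - y) ⟨by linarith [hy.2], by linarith [hy.1]⟩]
    ring
  rw [generator, generator, hint, hF', hFG x ⟨hx, le_rfl⟩]
  ring

theorem integral_mul_exp_neg_mul (al x : ℝ) :
    ∫ y in (0:ℝ)..x, al * exp (-al * y) = 1 - exp (-al * x) := by
  have h : ∀ y ∈ uIcc (0:ℝ) x, HasDerivAt (fun y => -exp (-al * y)) (al * exp (-al * y)) y :=
    fun y _ => (((hasDerivAt_id y).const_mul (-al)).exp.neg).congr_deriv (by simp; ring)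
  rw [integral_eq_sub_of_hasDerivAt h (Continuous.intervalIntegrable (by fun_prop) _ _)]
  simp only [neg_mul, mul_zero, exp_zero]
  ring

theorem integral_comp_sub_mul_exp_le {al x : ℝ} {F : ℝ → ℝ} (hal : 0 ≤ al) (hx : 0 ≤ x)
    (hF : MonotoneOn F (Icc 0 x)) (hFc : ContinuousOn F (Icc 0 x)) (hFx : 0 ≤ F x) :
    ∫ y in (0:ℝ)..x, F (x - y) * (al * exp (-al * y)) ≤ F x := by
  have hmem : ∀ y ∈ Icc 0 x, x - y ∈ Icc 0 x := fun y hy =>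
    ⟨by linarith [hy.2], by linarith [hy.1]⟩
  have hint : IntervalIntegrable (fun y => F (x - y) * (al * exp (-al * y)))
      MeasureTheory.volume 0 x := by
    refine ContinuousOn.intervalIntegrable ?_
    rw [uIcc_of_le hx]
    exact (hFc.comp (by fun_prop) hmem).mul (by fun_prop)
  calc ∫ y in (0:ℝ)..x, F (x - y) * (al * exp (-al * y))
      ≤ ∫ y in (0:ℝ)..x, F x * (al * exp (-al * y)) :=
        integral_mono_on hx hint (Continuous.intervalIntegrable (by fun_prop) _ _) fun y hy =>
          mul_le_mul_of_nonneg_right (hF (hmem y hy) ⟨hx, le_rfl⟩ (by linarith [hy.1]))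
            (by positivity)
    _ = F x * (1 - exp (-al * x)) := by
        rw [intervalIntegral.integral_const_mul, integral_mul_exp_neg_mul]
    _ ≤ F x := mul_le_of_le_one_right hFx (by linarith [exp_pos (-al * x)])

theorem pos_of_generator_eq_zero {lam del al x : ℝ} {g F F' : ℝ → ℝ} (hlam : 0 ≤ lam)
    (hdel : 0 < del) (hal : 0 ≤ al) (hx : 0 ≤ x) (hg : 0 ≤ g x) (hF : MonotoneOn F (Icc 0 x))
    (hFc : ContinuousOn F (Icc 0 x)) (hFx : 0 < F x) (h : generator lam del al g F F' x = 0) :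
    0 < F' x := by
  have hint := integral_comp_sub_mul_exp_le hal hx hF hFc hFx.le
  have hgF' : 0 < g x * F' x := by
    rw [generator] at h
    nlinarith [mul_le_mul_of_nonneg_left hint hlam, mul_pos hdel hFx]
  exact pos_of_mul_pos_right hgF' hg

theorem ode_of_generator_eq_zero {lam del al t g't F''t : ℝ} {g F F' : ℝ → ℝ}
    (hFc : ContinuousOn F (Ici 0)) (ht : 0 < t) (hg : HasDerivAt g g't t)
    (hF : HasDerivAt F (F' t) t) (hF' : HasDerivAt F' F''t t)
    (h : ∀ s > 0, generator lam del al g F F' s = 0) :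
    g t * F''t + (g't + al * g t - (lam + del)) * F' t - del * al * F t = 0 := by
  have hzero : HasDerivAt (fun s => exp (al * s) * generator lam del al g F F' s) 0 t :=
    (hasDerivAt_const t (0:ℝ)).congr_of_eventuallyEq <| by
      filter_upwards [Ioi_mem_nhds ht] with s hs
      simp [h s hs]
  have hD := (hasDerivAt_exp_mul_generator hFc ht hg hF hF').unique hzero
  exact (mul_eq_zero.mp hD).resolve_left (exp_pos _).ne'

theorem sub_le_mul_deriv_of_monotoneOn {f f' : ℝ → ℝ} {a b : ℝ} (hab : a < b)
    (hf : ∀ x ∈ Icc a b, HasDerivAt f (f' x) x) (hf' : MonotoneOn f' (Icc a b)) :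
    f b - f a ≤ (b - a) * f' b := by
  obtain ⟨c, hc, hslope⟩ := exists_hasDerivAt_eq_slope f f' hab
    (fun x hx => (hf x hx).continuousAt.continuousWithinAt)
    (fun x hx => hf x (Ioo_subset_Icc_self hx))
  rw [eq_div_iff (sub_pos.mpr hab).ne'] at hslope
  rw [← hslope, mul_comm]
  exact mul_le_mul_of_nonneg_left (hf' (Ioo_subset_Icc_self hc) ⟨hab.le, le_rfl⟩ hc.2.le)
    (sub_pos.mpr hab).le

theorem hasDerivAt_ite_le {u v : ℝ → ℝ} {b d : ℝ} (hu : HasDerivWithinAt u d (Iic b) b)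
    (hv : HasDerivWithinAt v d (Ici b) b) (huv : u b = v b) :
    HasDerivAt (fun y => if y ≤ b then u y else v y) d b := by
  have hleft : HasDerivWithinAt (fun y => if y ≤ b then u y else v y) d (Iic b) b :=
    hu.congr (fun y hy => if_pos hy) (if_pos le_rfl)
  have hright : HasDerivWithinAt (fun y => if y ≤ b then u y else v y) d (Ici b) b :=
    hv.congr (fun y hy => by
      rcases (mem_Ici.mp hy).eq_or_lt with rfl | hlt
      · simp [huv]
      · exact if_neg (not_le.mpr hlt)) (by simp [huv])
  simpa [Iic_union_Ici] using hleft.union hright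

theorem hasDerivAt_valueFunction {ψ ψ' : ℝ → ℝ} {b x : ℝ}
    (hψ : ∀ x ≥ 0, HasDerivAt ψ (ψ' x) x) (hc : ψ' b ≠ 0) (hx : 0 ≤ x) :
    HasDerivAt (valueFunction ψ ψ' b) (if x ≤ b then ψ' x / ψ' b else 1) x := by
  have hline : ∀ y, HasDerivAt (fun y => y - b + ψ b / ψ' b) 1 y := fun y =>
    ((hasDerivAt_id y).sub_const b).add_const _
  rcases lt_trichotomy x b with hxb | rfl | hxb
  · rw [if_pos hxb.le]
    refine ((hψ x hx).div_const _).congr_of_eventuallyEq ?_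
    filter_upwards [Iio_mem_nhds hxb] with y hy
    exact if_pos hy.le
  · rw [if_pos le_rfl, div_self hc]
    refine hasDerivAt_ite_le ?_ (hline x).hasDerivWithinAt (by simp)
    simpa [div_self hc] using ((hψ x hx).div_const (ψ' x)).hasDerivWithinAt
  · rw [if_neg (not_le.mpr hxb)]
    refine (hline x).congr_of_eventuallyEq ?_
    filter_upwards [Ioi_mem_nhds hxb] with y hy
    exact if_neg (not_le.mpr hy)

theorem continuousOn_deriv_valueFunction {ψ ψ' : ℝ → ℝ} {b : ℝ}
    (hψ : ∀ x ≥ 0, HasDerivAt ψ (ψ' x) x) (hψ' : ContinuousOn ψ' (Ici 0)) (hc : ψ' b ≠ 0) :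
    ContinuousOn (deriv (valueFunction ψ ψ' b)) (Ioi 0) := by
  refine ContinuousOn.congr (f := fun x => if x ≤ b then ψ' x / ψ' b else 1) ?_
    fun x hx => (hasDerivAt_valueFunction hψ hc (le_of_lt hx)).deriv
  refine ContinuousOn.if (fun x hx => ?_) ?_ continuousOn_const
  · have hxb : x ∈ frontier (Iic b) := hx.2
    rw [frontier_Iic, mem_singleton_iff] at hxb
    rw [hxb, div_self hc]
  · exact (hψ'.mono fun y hy => le_of_lt (mem_Ioi.mp hy.1)).div_const _

theorem generator_valueFunction_eq_zero {lam del al b x : ℝ} {g ψ ψ' : ℝ → ℝ}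
    (hψ : ∀ x ≥ 0, HasDerivAt ψ (ψ' x) x) (hψeq : ∀ x > 0, generator lam del al g ψ ψ' x = 0)
    (hc : ψ' b ≠ 0) (hx : 0 < x) (hxb : x ≤ b) :
    generator lam del al g (valueFunction ψ ψ' b) (deriv (valueFunction ψ ψ' b)) x = 0 := by
  rw [generator_congr_smul (c := (ψ' b)⁻¹) (G := ψ) (G' := ψ') hx.le
    (fun y hy => by simp [valueFunction, hy.2.trans hxb, div_eq_inv_mul])
    (by rw [(hasDerivAt_valueFunction hψ hc hx.le).deriv, if_pos hxb, div_eq_inv_mul]),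
    hψeq x hx, mul_zero]

theorem le_deriv_mul_valueFunction {ψ ψ' : ℝ → ℝ} {b t : ℝ} (hbt : b < t)
    (hψ : ∀ x ∈ Icc b t, HasDerivAt ψ (ψ' x) x) (hψ' : MonotoneOn ψ' (Icc b t))
    (hc : 0 < ψ' b) (hψb : 0 ≤ ψ b) :
    ψ t ≤ ψ' t * valueFunction ψ ψ' b t := by
  have htangent := sub_le_mul_deriv_of_monotoneOn hbt hψ hψ'
  have hψb_le : ψ b ≤ ψ' t * (ψ b / ψ' b) :=
    calc ψ b = ψ' b * (ψ b / ψ' b) := (mul_div_cancel₀ _ hc.ne').symm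
      _ ≤ ψ' t * (ψ b / ψ' b) :=
        mul_le_mul_of_nonneg_right (hψ' ⟨le_rfl, hbt.le⟩ ⟨hbt.le, le_rfl⟩ hbt.le)
          (div_nonneg hψb hc.le)
  rw [valueFunction, if_neg (not_le.mpr hbt)]
  linarith

theorem generator_valueFunction_nonpos {lam del al b x : ℝ} {g g' ψ ψ' ψ'' : ℝ → ℝ}
    (hdel : 0 ≤ del) (hal : 0 ≤ al) (hg : ∀ x ≥ 0, HasDerivAt g (g' x) x)
    (hgpos : ∀ x ≥ 0, 0 ≤ g x) (hψ : ∀ x ≥ 0, HasDerivAt ψ (ψ' x) x)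
    (hψ' : ∀ x ≥ 0, HasDerivAt ψ' (ψ'' x) x)
    (hψeq : ∀ x > 0, generator lam del al g ψ ψ' x = 0) (hb : 0 < b) (hc : 0 < ψ' b)
    (hψb : 0 ≤ ψ b) (hψ'' : ∀ x > b, 0 ≤ ψ'' x) (hx : b < x) :
    generator lam del al g (valueFunction ψ ψ' b) (fun _ => 1) x ≤ 0 := by
  set Φ := valueFunction ψ ψ' b
  set E := fun s => exp (al * s) * generator lam del al g Φ (fun _ => 1) s
  have hψc : ContinuousOn ψ (Ici 0) := fun t ht => (hψ t ht).continuousAt.continuousWithinAt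
  have hΦc : ContinuousOn Φ (Ici 0) := fun t ht =>
    (hasDerivAt_valueFunction hψ hc.ne' ht).continuousAt.continuousWithinAt
  have hΦ' : ∀ t ≥ b, HasDerivAt Φ 1 t := fun t ht => by
    have h := hasDerivAt_valueFunction hψ hc.ne' (hb.le.trans ht)
    split_ifs at h with htb
    · obtain rfl := le_antisymm htb ht
      rwa [div_self hc.ne'] at h
    · exact h
  have hE : ∀ t ≥ b, HasDerivAt E
      (exp (al * t) * (g t * 0 + (g' t + al * g t - (lam + del)) * 1 - del * al * Φ t)) t :=
    fun t ht => hasDerivAt_exp_mul_generator hΦc (hb.trans_le ht) (hg t (hb.le.trans ht))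
      (hΦ' t ht) (hasDerivAt_const t 1)
  have hEb : E b = 0 := by
    have hΦψ : generator lam del al g Φ (fun _ => 1) b
        = (ψ' b)⁻¹ * generator lam del al g ψ ψ' b :=
      generator_congr_smul hb.le (fun y hy => by simp [Φ, valueFunction, hy.2, div_eq_inv_mul])
        (inv_mul_cancel₀ hc.ne').symm
    simp [E, hΦψ, hψeq b hb]
  have hψ'mono : MonotoneOn ψ' (Ici b) :=
    monotoneOn_of_hasDerivWithinAt_nonneg (convex_Ici b)
      (fun t ht => (hψ' t (hb.le.trans ht)).continuousAt.continuousWithinAt)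
      (fun t ht => (hψ' t (hb.le.trans (le_of_lt (by simpa using ht)))).hasDerivWithinAt)
      (fun t ht => hψ'' t (by simpa using ht))
  -- `ψ` solves the differentiated equation and lies below `ψ' * Φ` beyond `b`
  have hdrift : ∀ t > b, g' t + al * g t - (lam + del) ≤ del * al * Φ t := fun t ht => by
    have ht0 : 0 ≤ t := hb.le.trans ht.le
    have hode :=
      ode_of_generator_eq_zero hψc (hb.trans ht) (hg t ht0) (hψ t ht0) (hψ' t ht0) hψeq
    have hkey := le_deriv_mul_valueFunction ht (fun y hy => hψ y (hb.le.trans hy.1))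
      (hψ'mono.mono Icc_subset_Ici_self) hc hψb
    have hψ't : 0 < ψ' t :=
      hc.trans_le (hψ'mono (mem_Ici.mpr le_rfl) (mem_Ici.mpr ht.le) ht.le)
    refine le_of_mul_le_mul_right ?_ hψ't
    nlinarith [mul_nonneg (hgpos t ht0) (hψ'' t ht),
      mul_le_mul_of_nonneg_left hkey (mul_nonneg hdel hal)]
  have hanti : AntitoneOn E (Icc b x) := by
    refine antitoneOn_of_hasDerivWithinAt_nonpos (convex_Icc b x)
      (fun t ht => (hE t ht.1).continuousAt.continuousWithinAt)
      (fun t ht => (hE t (interior_subset ht).1).hasDerivWithinAt) (fun t ht => ?_)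
    rw [interior_Icc] at ht
    have := hdrift t ht.1
    exact mul_nonpos_of_nonneg_of_nonpos (exp_pos _).le (by linarith)
  have hEx : E x ≤ 0 := hEb ▸ hanti ⟨le_rfl, hx.le⟩ ⟨hx.le, le_rfl⟩ hx.le
  exact nonpos_of_mul_nonpos_right hEx (exp_pos _)

end SingularDividend

end

open SingularDividend

theorem stmt_15_general (lam del al b : ℝ) (g g' ψ ψ' ψ'' Φ : ℝ → ℝ)
    (hlam : 0 < lam) (hdel : 0 < del) (hal : 0 < al)
    (hg : ∀ x ≥ (0:ℝ), HasDerivAt g (g' x) x)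
    (hgpos : ∀ x ≥ (0:ℝ), 0 ≤ g x)
    (hψd : ∀ x ≥ (0:ℝ), HasDerivAt ψ (ψ' x) x)
    (hψd2 : ∀ x ≥ (0:ℝ), HasDerivAt ψ' (ψ'' x) x)
    (hψmono : StrictMonoOn ψ (Set.Ici 0))
    (hψ0 : 0 ≤ ψ 0)
    (hψeq : ∀ x > (0:ℝ),
      g x * ψ' x - (lam + del) * ψ x
        + lam * ∫ y in (0:ℝ)..x, ψ (x - y) * (al * Real.exp (-al * y)) = 0)
    (hb : 0 < b)
    (hbmin : ∀ x ≥ (0:ℝ), ψ' b ≤ ψ' x)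
    (hψ'' : ∀ x > b, 0 ≤ ψ'' x)
    (hΦ : ∀ x, Φ x = if x ≤ b then ψ x / ψ' b else x - b + ψ b / ψ' b) :
    (∀ x > (0:ℝ), DifferentiableAt ℝ Φ x) ∧
    ContinuousOn (deriv Φ) (Set.Ioi 0) ∧
    deriv Φ b = 1 ∧
    (∀ x > (0:ℝ), 1 ≤ deriv Φ x) ∧
    ∀ x > (0:ℝ),
      max (g x * deriv Φ x - (lam + del) * Φ x
          + lam * ∫ y in (0:ℝ)..x, Φ (x - y) * (al * Real.exp (-al * y)))
        (1 - deriv Φ x) = 0 := by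
  obtain rfl : Φ = valueFunction ψ ψ' b := funext hΦ
  have hψgen : ∀ x > 0, generator lam del al g ψ ψ' x = 0 := hψeq
  have hψb : 0 < ψ b := hψ0.trans_lt (hψmono (mem_Ici.mpr le_rfl) (mem_Ici.mpr hb.le) hb)
  have hc : 0 < ψ' b := pos_of_generator_eq_zero hlam.le hdel hal.le hb.le (hgpos b hb.le)
    (hψmono.monotoneOn.mono Icc_subset_Ici_self)
    (fun x hx => (hψd x hx.1).continuousAt.continuousWithinAt) hψb (hψgen b hb)
  have hΦ' : ∀ x > 0, HasDerivAt (valueFunction ψ ψ' b) (if x ≤ b then ψ' x / ψ' b else 1) x :=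
    fun x hx => hasDerivAt_valueFunction hψd hc.ne' hx.le
  have hΦ'_ge : ∀ x > 0, 1 ≤ deriv (valueFunction ψ ψ' b) x := fun x hx => by
    rw [(hΦ' x hx).deriv]
    split_ifs
    exacts [(one_le_div hc).mpr (hbmin x hx.le), le_rfl]
  refine ⟨fun x hx => (hΦ' x hx).differentiableAt,
    continuousOn_deriv_valueFunction hψd
      (fun x hx => (hψd2 x hx).continuousAt.continuousWithinAt) hc.ne',
    by rw [(hΦ' b hb).deriv, if_pos le_rfl, div_self hc.ne'], hΦ'_ge, fun x hx => ?_⟩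
  change max (generator lam del al g _ (deriv (valueFunction ψ ψ' b)) x) _ = 0
  rcases le_or_gt x b with hxb | hxb
  · rw [generator_valueFunction_eq_zero hψd hψgen hc.ne' hx hxb]
    exact max_eq_left (by linarith [hΦ'_ge x hx])
  · have hone : deriv (valueFunction ψ ψ' b) x = 1 := by
      rw [(hΦ' x hx).deriv, if_neg (not_le.mpr hxb)]
    have hnonpos := generator_valueFunction_nonpos hdel.le hal.le hg hgpos hψd hψd2 hψgen hb hc
      hψb.le hψ'' hxb
    simp only [generator, hone, sub_self] at hnonpos ⊢
    exact max_eq_right hnonpos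

/-- Φ is continuously differentiable on (0,∞) with Φ'(b) = 1 and
Φ'(x) ≥ 1 for all x > 0, and Φ solves the quasi-variational inequality: for every x > 0,
max{ g(x)Φ'(x) − (λ+δ)Φ(x) + λ∫₀ˣ Φ(x−y)αe^{−αy}dy , 1 − Φ'(x) } = 0. -/
theorem stmt_15 (lam del al b : ℝ) (g g' ψ ψ' ψ'' Φ : ℝ → ℝ)
    (hlam : 0 < lam) (hdel : 0 < del) (hal : 0 < al)
    (hg : ∀ x ≥ (0:ℝ), HasDerivAt g (g' x) x)
    (hg'c : ContinuousOn g' (Set.Ici 0))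
    (hgpos : ∀ x ≥ (0:ℝ), 0 ≤ g x)
    (hψd : ∀ x ≥ (0:ℝ), HasDerivAt ψ (ψ' x) x)
    (hψd2 : ∀ x ≥ (0:ℝ), HasDerivAt ψ' (ψ'' x) x)
    (hψ''c : ContinuousOn ψ'' (Set.Ici 0))
    (hψmono : StrictMonoOn ψ (Set.Ici 0))
    (hψ0 : 0 ≤ ψ 0)
    (hψeq : ∀ x > (0:ℝ),
      g x * ψ' x - (lam + del) * ψ x
        + lam * ∫ y in (0:ℝ)..x, ψ (x - y) * (al * Real.exp (-al * y)) = 0)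
    (hb : 0 < b)
    (hbmin : ∀ x ≥ (0:ℝ), ψ' b ≤ ψ' x)
    (hψ'' : ∀ x > b, 0 ≤ ψ'' x)
    (hΦ : ∀ x, Φ x = if x ≤ b then ψ x / ψ' b else x - b + ψ b / ψ' b) :
    (∀ x > (0:ℝ), DifferentiableAt ℝ Φ x) ∧
    ContinuousOn (deriv Φ) (Set.Ioi 0) ∧
    deriv Φ b = 1 ∧
    (∀ x > (0:ℝ), 1 ≤ deriv Φ x) ∧
    ∀ x > (0:ℝ),
      max (g x * deriv Φ x - (lam + del) * Φ x
          + lam * ∫ y in (0:ℝ)..x, Φ (x - y) * (al * Real.exp (-al * y)))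
        (1 - deriv Φ x) = 0 :=
  stmt_15_general lam del al b g g' ψ ψ' ψ'' Φ hlam hdel hal hg hgpos hψd hψd2 hψmono hψ0 hψeq hb
    hbmin hψ'' hΦ
end

section
/- The inequality s²·(s+α) > r²·(r+α) holds if and only if α·λ·c > (λ+δ)²; equivalently, the barrier level b := (1/(r−s))·ln( s²(s+α)/(r²(r+α)) ) is strictly positive if and only if α·λ·c > (λ+δ)². -/
/-- s²(s+α) > r²(r+α) if and only if αλc > (λ+δ)²; equivalently, the
barrier level b = (1/(r−s))·ln(s²(s+α)/(r²(r+α))) is strictly positive if and only if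
αλc > (λ+δ)². -/
theorem stmt_16 (c lam del al r s : ℝ) (hc : 0 < c) (hlam : 0 < lam) (hdel : 0 < del)
    (hal : 0 < al)
    (hr : c * r ^ 2 - (lam + del - al * c) * r - al * del = 0)
    (hs : c * s ^ 2 - (lam + del - al * c) * s - al * del = 0)
    (hs1 : -al < s) (hs2 : s < 0) (hr1 : 0 < r) :
    (s ^ 2 * (s + al) > r ^ 2 * (r + al) ↔ al * lam * c > (lam + del) ^ 2) ∧
    (0 < (1 / (r - s)) * Real.log (s ^ 2 * (s + al) / (r ^ 2 * (r + al)))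
      ↔ al * lam * c > (lam + del) ^ 2) := by
  have hrs0 : r - s ≠ 0 := by nlinarith
  have hsum : c * (r + s) = lam + del - al * c := by
    have h : (r - s) * (c * (r + s) - (lam + del - al * c)) = 0 := by ring_nf; linear_combination hr - hs
    rcases mul_eq_zero.mp h with h' | h'
    · exact absurd h' hrs0
    · linarith [sub_eq_zero.mp h']
  have hprod : c * (r * s) = -(al * del) := by linear_combination r * hsum - hr
  have key : c ^ 2 * (s ^ 2 * (s + al) - r ^ 2 * (r + al))
      = (s - r) * ((lam + del) ^ 2 - al * lam * c) := by
    linear_combination (s - r) * ((c * (r + s) + (lam + del - al * c) + al * c) * hsum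
      - c * hprod)
  have hsr : s - r < 0 := by linarith
  have hc2 : (0:ℝ) < c ^ 2 := by positivity
  have hiff1 : s ^ 2 * (s + al) > r ^ 2 * (r + al) ↔ al * lam * c > (lam + del) ^ 2 := by
    constructor
    · intro h
      nlinarith [mul_pos hc2 (sub_pos.mpr h)]
    · intro h
      nlinarith [mul_pos_of_neg_of_neg hsr (by linarith : (lam + del) ^ 2 - al * lam * c < 0)]
  refine ⟨hiff1, ?_⟩
  have hQ : 0 < r ^ 2 * (r + al) := by positivity
  have hP : 0 < s ^ 2 * (s + al) := by
    have hs0 : s ≠ 0 := ne_of_lt hs2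
    have : 0 < s ^ 2 := by positivity
    nlinarith
  have hinv : 0 < 1 / (r - s) := by
    apply div_pos one_pos; linarith
  rw [← hiff1]
  constructor
  · intro h
    have hlog : 0 < Real.log (s ^ 2 * (s + al) / (r ^ 2 * (r + al))) := by
      by_contra h'
      push_neg at h'
      nlinarith [mul_nonpos_of_nonneg_of_nonpos (le_of_lt hinv) h']
    have := (Real.log_pos_iff (by positivity)).mp hlog
    have := (one_lt_div hQ).mp this
    linarith
  · intro h
    have h1 : 1 < s ^ 2 * (s + al) / (r ^ 2 * (r + al)) := (one_lt_div hQ).mpr h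
    exact mul_pos hinv (Real.log_pos h1)
end

section
/- The function φ(x) = x + c/(λ+δ) satisfies, for every x > 0, c·φ'(x) − (λ+δ)·φ(x) + λ·∫₀ˣ φ(x−y)·α·e^{−αy} dy = −δ·x + λ·(1 − e^{−αx})·(c/(λ+δ) − 1/α). In particular, if α·λ·c ≤ (λ+δ)², then this quantity is ≤ 0 for all x > 0, and hence φ solves the quasi-variational inequality: max{ c·φ'(x) − (λ+δ)·φ(x) + λ·∫₀ˣ φ(x−y)·α·e^{−αy} dy , 1 − φ'(x) } = 0 for every x > 0. -/
/-! Since `φ` is affine, the integral against the exponential density is elementary, which gives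
the identity. Under `αλc ≤ (λ+δ)²` one has `λ (c/(λ+δ) - 1/α) ≤ δ/α`, and together with
`0 ≤ 1 - e^{-αx} ≤ αx` this bounds the right-hand side by `-δx + (δ/α)(αx) = 0`. As `φ' = 1`,
the second entry of the maximum vanishes, so the maximum is `0`. -/

open Real

lemma integral_sub_add_mul_exp_neg_mul {a : ℝ} (ha : a ≠ 0) (k x : ℝ) :
    ∫ y in (0:ℝ)..x, ((x - y) + k) * (a * exp (-a * y))
      = (x + k - 1 / a) - (k - 1 / a) * exp (-a * x) := by
  have hderiv : ∀ y ∈ Set.uIcc (0:ℝ) x,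
      HasDerivAt (fun y => (y - (x + k - 1 / a)) * exp (-a * y))
        (((x - y) + k) * (a * exp (-a * y))) y := by
    intro y _
    have hexp : HasDerivAt (fun y : ℝ => exp (-a * y)) (exp (-a * y) * (-a * 1)) y :=
      ((hasDerivAt_id y).const_mul (-a)).exp
    refine (((hasDerivAt_id' y).sub_const (x + k - 1 / a)).mul hexp).congr_deriv ?_
    field_simp
    ring
  have hint : IntervalIntegrable (fun y => ((x - y) + k) * (a * exp (-a * y)))
      MeasureTheory.volume 0 x :=
    Continuous.intervalIntegrable (by fun_prop) 0 x
  rw [intervalIntegral.integral_eq_sub_of_hasDerivAt hderiv hint]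
  simp only [mul_zero, exp_zero, mul_one]
  ring

lemma one_sub_exp_neg_mul_le {a x : ℝ} : 1 - exp (-a * x) ≤ a * x := by
  linarith [add_one_le_exp (-a * x)]

lemma mul_sub_inv_le_div {c lam del al : ℝ} (hL : 0 < lam + del) (hal : 0 < al)
    (h : al * lam * c ≤ (lam + del) ^ 2) :
    lam * (c / (lam + del) - 1 / al) ≤ del / al := by
  have hdiff : lam * (c / (lam + del) - 1 / al) - del / al
      = (al * lam * c - (lam + del) ^ 2) / (al * (lam + del)) := by
    field_simp
    ring
  have : (al * lam * c - (lam + del) ^ 2) / (al * (lam + del)) ≤ 0 :=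
    div_nonpos_of_nonpos_of_nonneg (by linarith) (by positivity)
  linarith

lemma neg_mul_add_mul_one_sub_exp_nonpos {c lam del al x : ℝ} (hL : 0 < lam + del)
    (hdel : 0 ≤ del) (hal : 0 < al) (hx : 0 ≤ x) (h : al * lam * c ≤ (lam + del) ^ 2) :
    -del * x + lam * (1 - exp (-al * x)) * (c / (lam + del) - 1 / al) ≤ 0 := by
  have hu : 0 ≤ 1 - exp (-al * x) := by
    rw [sub_nonneg, exp_le_one_iff]
    nlinarith
  have hbound :=
    calc lam * (1 - exp (-al * x)) * (c / (lam + del) - 1 / al)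
        = lam * (c / (lam + del) - 1 / al) * (1 - exp (-al * x)) := by ring
      _ ≤ del / al * (1 - exp (-al * x)) :=
        mul_le_mul_of_nonneg_right (mul_sub_inv_le_div hL hal h) hu
      _ ≤ del / al * (al * x) :=
        mul_le_mul_of_nonneg_left one_sub_exp_neg_mul_le (by positivity)
      _ = del * x := by field_simp
  linarith

theorem stmt_17_general (c lam del al : ℝ) (hlam : 0 < lam) (hdel : 0 < del)
    (hal : 0 < al) :
    (∀ x > (0:ℝ),
      c * deriv (fun z => z + c / (lam + del)) x - (lam + del) * (x + c / (lam + del))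
          + lam * ∫ y in (0:ℝ)..x, ((x - y) + c / (lam + del)) * (al * Real.exp (-al * y))
        = -del * x + lam * (1 - Real.exp (-al * x)) * (c / (lam + del) - 1 / al)) ∧
    (al * lam * c ≤ (lam + del) ^ 2 →
      (∀ x > (0:ℝ),
        -del * x + lam * (1 - Real.exp (-al * x)) * (c / (lam + del) - 1 / al) ≤ 0) ∧
      ∀ x > (0:ℝ),
        max (c * deriv (fun z => z + c / (lam + del)) x
              - (lam + del) * (x + c / (lam + del))
              + lam * ∫ y in (0:ℝ)..x,
                  ((x - y) + c / (lam + del)) * (al * Real.exp (-al * y)))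
          (1 - deriv (fun z => z + c / (lam + del)) x) = 0) := by
  have hL : 0 < lam + del := by linarith
  have hφ' : ∀ x, deriv (fun z => z + c / (lam + del)) x = 1 := fun x => by simp
  have hgen : ∀ x > (0:ℝ),
      c * deriv (fun z => z + c / (lam + del)) x - (lam + del) * (x + c / (lam + del))
          + lam * ∫ y in (0:ℝ)..x, ((x - y) + c / (lam + del)) * (al * exp (-al * y))
        = -del * x + lam * (1 - exp (-al * x)) * (c / (lam + del) - 1 / al) := by
    intro x _
    rw [hφ', integral_sub_add_mul_exp_neg_mul hal.ne']
    field_simp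
    ring
  refine ⟨hgen, fun h => ⟨fun x hx => neg_mul_add_mul_one_sub_exp_nonpos hL hdel.le hal hx.le h,
    fun x hx => ?_⟩⟩
  rw [hgen x hx, hφ', sub_self]
  exact max_eq_right (neg_mul_add_mul_one_sub_exp_nonpos hL hdel.le hal hx.le h)

/-- φ(x) = x + c/(λ+δ) satisfies, for every x > 0,
cφ'(x) − (λ+δ)φ(x) + λ∫₀ˣ φ(x−y)αe^{−αy}dy = −δx + λ(1 − e^{−αx})(c/(λ+δ) − 1/α).
In particular, if αλc ≤ (λ+δ)², then this quantity is ≤ 0 for all x > 0, and φ solves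
the quasi-variational inequality
max{ cφ'(x) − (λ+δ)φ(x) + λ∫₀ˣ φ(x−y)αe^{−αy}dy , 1 − φ'(x) } = 0 for every x > 0. -/
theorem stmt_17 (c lam del al : ℝ) (hc : 0 < c) (hlam : 0 < lam) (hdel : 0 < del)
    (hal : 0 < al) :
    (∀ x > (0:ℝ),
      c * deriv (fun z => z + c / (lam + del)) x - (lam + del) * (x + c / (lam + del))
          + lam * ∫ y in (0:ℝ)..x, ((x - y) + c / (lam + del)) * (al * Real.exp (-al * y))
        = -del * x + lam * (1 - Real.exp (-al * x)) * (c / (lam + del) - 1 / al)) ∧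
    (al * lam * c ≤ (lam + del) ^ 2 →
      (∀ x > (0:ℝ),
        -del * x + lam * (1 - Real.exp (-al * x)) * (c / (lam + del) - 1 / al) ≤ 0) ∧
      ∀ x > (0:ℝ),
        max (c * deriv (fun z => z + c / (lam + del)) x
              - (lam + del) * (x + c / (lam + del))
              + lam * ∫ y in (0:ℝ)..x,
                  ((x - y) + c / (lam + del)) * (al * Real.exp (-al * y)))
          (1 - deriv (fun z => z + c / (lam + del)) x) = 0) :=
  stmt_17_general c lam del al hlam hdel hal
end

section
/- Assume s < t and s(s−t)/(r(r−t)) > 1, and set d = (1/(r−s))·ln( s(s−t)/(r(r−t)) ), so that d > 0. Define V(x) = [(r+α)·e^{rx} − (s+α)·e^{sx}] / [r(r+α)·e^{rd} − s(s+α)·e^{sd}] for 0 ≤ x < d and V(x) = u₀/δ + (1/t)·e^{t(x−d)} for x ≥ d. Then V is continuously differentiable on (0,∞) and satisfies the Hamilton–Jacobi–Bellman equation of the restricted dividend problem: for every x > 0, the supremum over u ∈ [0, u₀] of (c − u)·V'(x) − (λ+δ)·V(x) + λ·∫₀ˣ V(x−y)·α·e^{−αy} dy + u equals 0. -/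
/-!
Below the barrier `d` the Hamiltonian is maximised at `u = 0`, above it at `u = u₀`: it is affine
in `u` with slope `1 - V'`, and `V'` decreases through `1` at `d` (below `d` because
`V'' < 0` there, above `d` because `V' = e^{t(x-d)}`). On each side `V` is a combination of
exponentials `e^{ρx}` with `ρ` a root of the characteristic equation of the premium rate in use,
which is exactly what makes the integro-differential operator vanish. The claim integral
`G x = ∫₀ˣ V(x-y) α e^{-αy} dy` is computed as the solution of `G' = α (V - G)`, `G 0 = 0`.
The choice of `d` makes `V - G` continuous at `d`; subtracting the two HJB equations at `d`,
where both branches have slope `1`, then forces `V`, hence `G`, to be continuous there too.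
-/

open Real Set

theorem hasDerivAt_ite_lt {f g f' g' : ℝ → ℝ} {d : ℝ}
    (hf : ∀ x, HasDerivAt f (f' x) x) (hg : ∀ x, HasDerivAt g (g' x) x)
    (hfg : f d = g d) (hfg' : f' d = g' d) (x : ℝ) :
    HasDerivAt (fun y => if y < d then f y else g y) (if x < d then f' x else g' x) x := by
  rcases lt_trichotomy x d with hx | rfl | hx
  · rw [if_pos hx]
    refine (hf x).congr_of_eventuallyEq ?_
    filter_upwards [Iio_mem_nhds hx] with y hy using if_pos hy
  · rw [if_neg (lt_irrefl x), ← hasDerivWithinAt_univ, ← Iic_union_Ici]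
    refine HasDerivWithinAt.union ?_ ((hg x).hasDerivWithinAt.congr ?_ ?_)
    · rw [← hfg']
      refine (hf x).hasDerivWithinAt.congr (fun y hy => ?_) ?_
      · rcases (mem_Iic.mp hy).lt_or_eq with h | rfl
        · exact if_pos h
        · simp [hfg]
      · simp [hfg]
    · intro y hy
      exact if_neg (not_lt.mpr hy)
    · simp
  · rw [if_neg (not_lt.mpr hx.le)]
    refine (hg x).congr_of_eventuallyEq ?_
    filter_upwards [Ioi_mem_nhds hx] with y hy using if_neg (not_lt.mpr (le_of_lt hy))

theorem continuous_ite_lt {f g : ℝ → ℝ} {d : ℝ} (hf : Continuous f) (hg : Continuous g)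
    (hfg : f d = g d) : Continuous fun y => if y < d then f y else g y :=
  hf.if (fun y hy => by
    rw [show {y : ℝ | y < d} = Iio d from rfl, frontier_Iio] at hy
    rw [hy, hfg]) hg

theorem integral_comp_sub_mul_exp_eq {V G : ℝ → ℝ} {al x : ℝ}
    (hV : ContinuousOn V (uIcc 0 x))
    (hG : ∀ z ∈ uIcc 0 x, HasDerivAt G (al * (V z - G z)) z) (hG0 : G 0 = 0) :
    ∫ y in (0:ℝ)..x, V (x - y) * (al * exp (-al * y)) = G x := by
  have hsub : ∫ y in (0:ℝ)..x, V (x - y) * (al * exp (-al * y))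
      = ∫ z in (0:ℝ)..x, V z * (al * exp (-al * (x - z))) := by
    simpa only [sub_sub_cancel, sub_self, sub_zero] using
      intervalIntegral.integral_comp_sub_left (a := 0) (b := x)
        (fun z => V z * (al * exp (-al * (x - z)))) x
  have hF : ∀ z ∈ uIcc 0 x, HasDerivAt (fun z => exp (-al * (x - z)) * G z)
      (V z * (al * exp (-al * (x - z)))) z := by
    intro z hz
    have hk : HasDerivAt (fun z => exp (-al * (x - z))) (al * exp (-al * (x - z))) z := by
      convert ((hasDerivAt_id' z).const_sub x |>.const_mul (-al)).exp using 1
      ring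
    exact (hk.mul (hG z hz)).congr_deriv (by ring)
  have hint : IntervalIntegrable (fun z => V z * (al * exp (-al * (x - z))))
      MeasureTheory.volume 0 x :=
    (hV.mul (by fun_prop)).intervalIntegrable
  rw [hsub, intervalIntegral.integral_eq_sub_of_hasDerivAt hF hint, hG0]
  simp

theorem csSup_image_Icc_eq_zero_of_one_le {c p a b u0 : ℝ} (hu0 : 0 ≤ u0) (hp : 1 ≤ p)
    (h : c * p - a + b = 0) :
    sSup ((fun u => (c - u) * p - a + b + u) '' Icc 0 u0) = 0 := by
  refine IsGreatest.csSup_eq ⟨⟨0, ⟨le_rfl, hu0⟩, by simpa using h⟩, ?_⟩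
  rintro _ ⟨u, hu, rfl⟩
  nlinarith [hu.1]

theorem csSup_image_Icc_eq_zero_of_le_one {c p a b u0 : ℝ} (hu0 : 0 ≤ u0) (hp : p ≤ 1)
    (h : (c - u0) * p - a + b + u0 = 0) :
    sSup ((fun u => (c - u) * p - a + b + u) '' Icc 0 u0) = 0 := by
  refine IsGreatest.csSup_eq ⟨⟨u0, ⟨hu0, le_rfl⟩, h⟩, ?_⟩
  rintro _ ⟨u, hu, rfl⟩
  nlinarith [hu.2]

noncomputable section

variable {c lam del al u0 r s t d K : ℝ}

def valueBelow (al r s K x : ℝ) : ℝ := ((r + al) * exp (r * x) - (s + al) * exp (s * x)) / K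

def slopeBelow (al r s K x : ℝ) : ℝ := (r * (r + al) * exp (r * x) - s * (s + al) * exp (s * x)) / K

/-- `convBelow` and `convAbove` solve `G' = α (V - G)` for `V = valueBelow`, resp.
`V = valueAbove`; glued at `d` they give the claim integral `∫₀ˣ V(x-y) α e^{-αy} dy`. -/
def convBelow (al r s K x : ℝ) : ℝ := al * (exp (r * x) - exp (s * x)) / K

def valueAbove (del u0 t d x : ℝ) : ℝ := u0 / del + (1 / t) * exp (t * (x - d))

def convAbove (al del u0 t d x : ℝ) : ℝ := u0 / del + al * exp (t * (x - d)) / (t * (t + al))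

theorem hasDerivAt_exp_mul (k x : ℝ) : HasDerivAt (fun y => exp (k * y)) (k * exp (k * x)) x := by
  simpa [mul_comm] using ((hasDerivAt_id x).const_mul k).exp

theorem hasDerivAt_valueBelow (x : ℝ) :
    HasDerivAt (valueBelow al r s K) (slopeBelow al r s K x) x :=
  (((hasDerivAt_exp_mul r x).const_mul (r + al)).sub
    ((hasDerivAt_exp_mul s x).const_mul (s + al))).div_const K |>.congr_deriv (by
      unfold slopeBelow; ring)

theorem hasDerivAt_slopeBelow (x : ℝ) :
    HasDerivAt (slopeBelow al r s K)
      ((r ^ 2 * (r + al) * exp (r * x) - s ^ 2 * (s + al) * exp (s * x)) / K) x :=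
  (((hasDerivAt_exp_mul r x).const_mul (r * (r + al))).sub
    ((hasDerivAt_exp_mul s x).const_mul (s * (s + al)))).div_const K |>.congr_deriv (by ring)

theorem hasDerivAt_convBelow (x : ℝ) :
    HasDerivAt (convBelow al r s K) (al * (valueBelow al r s K x - convBelow al r s K x)) x :=
  (((hasDerivAt_exp_mul r x).sub (hasDerivAt_exp_mul s x)).const_mul al).div_const K
    |>.congr_deriv (by unfold valueBelow convBelow; ring)

theorem hasDerivAt_exp_mul_sub (t d x : ℝ) :
    HasDerivAt (fun y => exp (t * (y - d))) (t * exp (t * (x - d))) x := by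
  simpa [mul_comm] using (((hasDerivAt_id x).sub_const d).const_mul t).exp

theorem hasDerivAt_valueAbove (ht : t ≠ 0) (x : ℝ) :
    HasDerivAt (valueAbove del u0 t d) (exp (t * (x - d))) x :=
  ((hasDerivAt_exp_mul_sub t d x).const_mul (1 / t)).const_add (u0 / del) |>.congr_deriv (by
    field_simp)

theorem hasDerivAt_convAbove (ht : t ≠ 0) (hta : t + al ≠ 0) (x : ℝ) :
    HasDerivAt (convAbove al del u0 t d)
      (al * (valueAbove del u0 t d x - convAbove al del u0 t d x)) x :=
  ((hasDerivAt_exp_mul_sub t d x).const_mul al |>.div_const (t * (t + al))).const_add (u0 / del)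
    |>.congr_deriv (by unfold valueAbove convAbove; field_simp; ring)

theorem hjb_below (hr : c * r ^ 2 - (lam + del - al * c) * r - al * del = 0)
    (hs : c * s ^ 2 - (lam + del - al * c) * s - al * del = 0) (x : ℝ) :
    c * slopeBelow al r s K x - (lam + del) * valueBelow al r s K x
      + lam * convBelow al r s K x = 0 := by
  have h : c * slopeBelow al r s K x - (lam + del) * valueBelow al r s K x
      + lam * convBelow al r s K x
      = (exp (r * x) * (c * r ^ 2 - (lam + del - al * c) * r - al * del)
        - exp (s * x) * (c * s ^ 2 - (lam + del - al * c) * s - al * del)) / K := by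
    unfold slopeBelow valueBelow convBelow; ring
  rw [h, hr, hs]
  simp

theorem hjb_above (htr : (c - u0) * t ^ 2 - (lam + del - al * (c - u0)) * t - al * del = 0)
    (hdel : del ≠ 0) (ht : t ≠ 0) (hta : t + al ≠ 0) (x : ℝ) :
    (c - u0) * exp (t * (x - d)) - (lam + del) * valueAbove del u0 t d x
      + lam * convAbove al del u0 t d x + u0 = 0 := by
  unfold valueAbove convAbove
  field_simp
  linear_combination del * exp (t * (x - d)) * htr

theorem mul_exp_eq_of_barrier (hsr : s < r) (hratio : 0 < s * (s - t) / (r * (r - t)))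
    (hd : d = (1 / (r - s)) * log (s * (s - t) / (r * (r - t)))) :
    r * (r - t) * exp (r * d) = s * (s - t) * exp (s * d) := by
  have hexp : exp ((r - s) * d) = s * (s - t) / (r * (r - t)) := by
    rw [hd, ← mul_assoc, mul_one_div_cancel (sub_ne_zero.2 hsr.ne'), one_mul, exp_log hratio]
  have hrt : r * (r - t) ≠ 0 := by
    intro h
    simp [h] at hratio
  rw [show r * d = (r - s) * d + s * d by ring, exp_add, hexp, ← mul_assoc,
    mul_div_cancel₀ _ hrt]

theorem barrier_curvature_neg (hr : c * r ^ 2 - (lam + del - al * c) * r - al * del = 0)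
    (hs : c * s ^ 2 - (lam + del - al * c) * s - al * del = 0)
    (htr : (c - u0) * t ^ 2 - (lam + del - al * (c - u0)) * t - al * del = 0)
    (hE : r * (r - t) * exp (r * d) = s * (s - t) * exp (s * d))
    (hc : 0 < c) (hu0c : u0 < c) (hst : s < t) (ht : t < 0) (hr0 : 0 < r) (hta : 0 < t + al) :
    r ^ 2 * (r + al) * exp (r * d) < s ^ 2 * (s + al) * exp (s * d) := by
  have hsum : c * (r + s) = lam + del - al * c := by
    have h : (r - s) * (c * (r + s) - (lam + del - al * c)) = 0 := by linear_combination hr - hs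
    linarith [(mul_eq_zero.mp h).resolve_left (by linarith)]
  -- the characteristic polynomial of `c` is `c (ξ - r) (ξ - s)` and exceeds that of `c - u₀`
  -- by `u₀ ξ (ξ + α)`; evaluate at `t`
  have hgap : 0 < r * s - t * (r + s + al) := by
    have h : c * (r * s - t * (r + s + al)) = -((c - u0) * t * (t + al)) := by
      linear_combination (r - t) * hsum - hr + htr
    have : 0 < (c - u0) * -t * (t + al) :=
      mul_pos (mul_pos (sub_pos.2 hu0c) (neg_pos.2 ht)) hta
    exact pos_of_mul_pos_right (by linarith) hc.le
  have key : (r - t) * (r ^ 2 * (r + al) * exp (r * d) - s ^ 2 * (s + al) * exp (s * d))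
      = s * exp (s * d) * (r - s) * (r * s - t * (r + s + al)) := by
    linear_combination r * (r + al) * hE
  have : s * exp (s * d) * (r - s) * (r * s - t * (r + s + al)) < 0 :=
    mul_neg_of_neg_of_pos (mul_neg_of_neg_of_pos
      (mul_neg_of_neg_of_pos (by linarith) (exp_pos _)) (by linarith)) hgap
  nlinarith

theorem barrier_matching (hr : c * r ^ 2 - (lam + del - al * c) * r - al * del = 0)
    (hs : c * s ^ 2 - (lam + del - al * c) * s - al * del = 0)
    (htr : (c - u0) * t ^ 2 - (lam + del - al * (c - u0)) * t - al * del = 0)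
    (hE : r * (r - t) * exp (r * d) = s * (s - t) * exp (s * d))
    (hK : K = r * (r + al) * exp (r * d) - s * (s + al) * exp (s * d)) (hK0 : K ≠ 0)
    (hdel : del ≠ 0) (ht : t ≠ 0) (hta : t + al ≠ 0) :
    valueBelow al r s K d = valueAbove del u0 t d d ∧
      convBelow al r s K d = convAbove al del u0 t d d := by
  have hslope : slopeBelow al r s K d = 1 := by rw [slopeBelow, ← hK, div_self hK0]
  have hgap : valueBelow al r s K d - convBelow al r s K d
      = valueAbove del u0 t d d - convAbove al del u0 t d d := by
    have h : (t + al) * (r * exp (r * d) - s * exp (s * d)) = K := by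
      rw [hK]; linear_combination -hE
    have hgap_below : valueBelow al r s K d - convBelow al r s K d
        = (r * exp (r * d) - s * exp (s * d)) / K := by
      unfold valueBelow convBelow; ring
    have hgap_above : valueAbove del u0 t d d - convAbove al del u0 t d d = 1 / (t + al) := by
      unfold valueAbove convAbove
      rw [sub_self, mul_zero, exp_zero]
      field_simp
      ring
    rw [hgap_below, hgap_above, div_eq_div_iff hK0 hta, one_mul, ← h]
    ring
  have hbelow := hjb_below (K := K) hr hs d
  have habove := hjb_above (d := d) htr hdel ht hta d
  rw [hslope] at hbelow
  rw [sub_self, mul_zero, exp_zero] at habove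
  have hvalue : del * (valueBelow al r s K d - valueAbove del u0 t d d) = 0 := by
    linear_combination habove - hbelow - lam * hgap
  have := (mul_eq_zero.mp hvalue).resolve_left hdel
  exact ⟨by linarith, by linarith⟩

theorem continuous_slopeBelow : Continuous (slopeBelow al r s K) :=
  continuous_iff_continuousAt.2 fun x => (hasDerivAt_slopeBelow x).continuousAt

theorem antitoneOn_slopeBelow (hK : 0 ≤ K) (hr : 0 ≤ r) (hs : s ≤ 0) (hra : 0 ≤ r + al)
    (hsa : 0 ≤ s + al)
    (hcurv : r ^ 2 * (r + al) * exp (r * d) ≤ s ^ 2 * (s + al) * exp (s * d)) :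
    AntitoneOn (slopeBelow al r s K) (Iic d) := by
  refine antitoneOn_of_hasDerivWithinAt_nonpos (convex_Iic d) continuous_slopeBelow.continuousOn
    (fun x _ => (hasDerivAt_slopeBelow x).hasDerivWithinAt) fun x hx => ?_
  rw [interior_Iic, mem_Iio] at hx
  refine div_nonpos_of_nonpos_of_nonneg (sub_nonpos.2 ?_) hK
  calc r ^ 2 * (r + al) * exp (r * x) ≤ r ^ 2 * (r + al) * exp (r * d) := by
        gcongr
    _ ≤ s ^ 2 * (s + al) * exp (s * d) := hcurv
    _ ≤ s ^ 2 * (s + al) * exp (s * x) :=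
        mul_le_mul_of_nonneg_left (exp_le_exp.2 (mul_le_mul_of_nonpos_left hx.le hs))
          (by positivity)

end

theorem stmt_19_general (c lam del al u0 r s t d : ℝ) (V : ℝ → ℝ)
    (hc : 0 < c) (hdel : 0 < del)
    (hu0 : 0 < u0) (hu0c : u0 < c)
    (hr : c * r ^ 2 - (lam + del - al * c) * r - al * del = 0)
    (hs : c * s ^ 2 - (lam + del - al * c) * s - al * del = 0)
    (hs1 : -al < s) (hs2 : s < 0) (hr1 : 0 < r)
    (ht0 : t < 0)
    (htr : (c - u0) * t ^ 2 - (lam + del - al * (c - u0)) * t - al * del = 0)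
    (hst : s < t)
    (hratio : s * (s - t) / (r * (r - t)) > 1)
    (hd : d = (1 / (r - s)) * Real.log (s * (s - t) / (r * (r - t))))
    (hV : ∀ x, V x =
      if x < d then
        ((r + al) * Real.exp (r * x) - (s + al) * Real.exp (s * x))
          / (r * (r + al) * Real.exp (r * d) - s * (s + al) * Real.exp (s * d))
      else
        u0 / del + (1 / t) * Real.exp (t * (x - d))) :
    0 < d ∧
    (∀ x > (0:ℝ), DifferentiableAt ℝ V x) ∧
    ContinuousOn (deriv V) (Set.Ioi 0) ∧
    ∀ x > (0:ℝ),
      sSup ((fun u => (c - u) * deriv V x - (lam + del) * V x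
          + lam * (∫ y in (0:ℝ)..x, V (x - y) * (al * Real.exp (-al * y))) + u) ''
        Set.Icc (0:ℝ) u0) = 0 := by
  have hd0 : 0 < d := hd ▸ mul_pos (one_div_pos.2 (by linarith)) (log_pos hratio)
  have hE := mul_exp_eq_of_barrier (by linarith) (by linarith) hd
  set K := r * (r + al) * exp (r * d) - s * (s + al) * exp (s * d) with hK
  have hK0 : 0 < K := by
    nlinarith [exp_pos (r * d), exp_pos (s * d), mul_pos hr1 (by linarith : 0 < r + al),
      mul_neg_of_neg_of_pos hs2 (by linarith : 0 < s + al)]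
  have hta : 0 < t + al := by linarith
  obtain ⟨hVd, hGd⟩ := barrier_matching hr hs htr hE hK hK0.ne' hdel.ne' ht0.ne hta.ne'
  have hslope : slopeBelow al r s K d = 1 := by rw [slopeBelow, ← hK, div_self hK0.ne']
  have hslope' : slopeBelow al r s K d = exp (t * (d - d)) := by simp [hslope]
  have hVeq : V = fun x => if x < d then valueBelow al r s K x else valueAbove del u0 t d x :=
    funext hV
  set G := fun x => if x < d then convBelow al r s K x else convAbove al del u0 t d x
  have hV' : ∀ x, HasDerivAt V (if x < d then slopeBelow al r s K x else exp (t * (x - d))) x :=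
    hVeq ▸ hasDerivAt_ite_lt hasDerivAt_valueBelow (hasDerivAt_valueAbove ht0.ne) hVd hslope'
  have hG' : ∀ x, HasDerivAt G (al * (V x - G x)) x := fun x =>
    (hasDerivAt_ite_lt hasDerivAt_convBelow (hasDerivAt_convAbove ht0.ne hta.ne') hGd
      (by rw [hVd, hGd]) x).congr_deriv (by by_cases h : x < d <;> simp [hVeq, G, h])
  have hJ : ∀ x, ∫ y in (0:ℝ)..x, V (x - y) * (al * exp (-al * y)) = G x := fun x =>
    integral_comp_sub_mul_exp_eq
      (continuous_iff_continuousAt.2 fun z => (hV' z).continuousAt).continuousOn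
      (fun z _ => hG' z) (by simp [G, hd0, convBelow])
  refine ⟨hd0, fun x _ => (hV' x).differentiableAt, ?_, fun x _ => ?_⟩
  · rw [funext fun x => (hV' x).deriv]
    exact (continuous_ite_lt continuous_slopeBelow (by fun_prop) hslope').continuousOn
  · rw [(hV' x).deriv, hJ x, hVeq]
    by_cases hxd : x < d
    · simp only [G, if_pos hxd]
      refine csSup_image_Icc_eq_zero_of_one_le hu0.le ?_ (hjb_below hr hs x)
      exact hslope ▸ antitoneOn_slopeBelow hK0.le hr1.le hs2.le (by linarith) (by linarith)
        (barrier_curvature_neg hr hs htr hE hc hu0c hst ht0 hr1 hta).le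
        (mem_Iic.2 hxd.le) (mem_Iic.2 le_rfl) hxd.le
    · simp only [G, if_neg hxd]
      refine csSup_image_Icc_eq_zero_of_le_one hu0.le ?_ (hjb_above htr hdel.ne' ht0.ne hta.ne' x)
      exact exp_le_one_iff.2 (mul_nonpos_of_nonpos_of_nonneg ht0.le (by linarith))

/-- Assume s < t and s(s−t)/(r(r−t)) > 1, and set
d = (1/(r−s))·ln(s(s−t)/(r(r−t))) > 0. Define
V(x) = [(r+α)e^{rx} − (s+α)e^{sx}]/[r(r+α)e^{rd} − s(s+α)e^{sd}] for 0 ≤ x < d and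
V(x) = u₀/δ + (1/t)e^{t(x−d)} for x ≥ d. Then V is continuously differentiable on
(0,∞) and satisfies the HJB equation of the restricted dividend problem: for every
x > 0, sup_{u ∈ [0,u₀]} { (c−u)V'(x) − (λ+δ)V(x) + λ∫₀ˣ V(x−y)αe^{−αy}dy + u } = 0. -/
theorem stmt_19 (c lam del al u0 r s t d : ℝ) (V : ℝ → ℝ)
    (hc : 0 < c) (hlam : 0 < lam) (hdel : 0 < del) (hal : 0 < al)
    (hu0 : 0 < u0) (hu0c : u0 < c)
    (hr : c * r ^ 2 - (lam + del - al * c) * r - al * del = 0)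
    (hs : c * s ^ 2 - (lam + del - al * c) * s - al * del = 0)
    (hs1 : -al < s) (hs2 : s < 0) (hr1 : 0 < r)
    (ht0 : t < 0)
    (htr : (c - u0) * t ^ 2 - (lam + del - al * (c - u0)) * t - al * del = 0)
    (hst : s < t)
    (hratio : s * (s - t) / (r * (r - t)) > 1)
    (hd : d = (1 / (r - s)) * Real.log (s * (s - t) / (r * (r - t))))
    (hV : ∀ x, V x =
      if x < d then
        ((r + al) * Real.exp (r * x) - (s + al) * Real.exp (s * x))
          / (r * (r + al) * Real.exp (r * d) - s * (s + al) * Real.exp (s * d))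
      else
        u0 / del + (1 / t) * Real.exp (t * (x - d))) :
    0 < d ∧
    (∀ x > (0:ℝ), DifferentiableAt ℝ V x) ∧
    ContinuousOn (deriv V) (Set.Ioi 0) ∧
    ∀ x > (0:ℝ),
      sSup ((fun u => (c - u) * deriv V x - (lam + del) * V x
          + lam * (∫ y in (0:ℝ)..x, V (x - y) * (al * Real.exp (-al * y))) + u) ''
        Set.Icc (0:ℝ) u0) = 0 :=
  stmt_19_general c lam del al u0 r s t d V hc hdel hu0 hu0c hr hs hs1 hs2 hr1 ht0 htr hst hratio hd
    hV
end
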